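/- arXiv:1712.09617 — 11 statements merged into one kernel-verified Lean document; each statement's English description precedes it below -/
import Mathlib

section
/- Let k ≥ 2 and let G = (V, E) be a k-uniform hypergraph of transfer type b with |E| = |V| − b + 1. Then G has a system of distinct representatives. -/
/-- A system of distinct representatives (SDR) for a hypergraph with vertex type `V`
and edge set `E`. -/
def HasSDR {V : Type*} [DecidableEq V] (E : Finset (Finset V)) : Prop :=
  ∃ f : Finset V → V, Set.InjOn f ↑E ∧ ∀ e ∈ E, f e ∈ e

/-- A transfer filtration of type `b` on the hypergraph with (finite) vertex type `V` and
edge set `E`. -/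
def HasTransferFiltration {V : Type*} [Fintype V] [DecidableEq V]
    (E : Finset (Finset V)) (b : ℕ) : Prop :=
  ∃ (ε : Fin E.card → Finset V) (C : ℕ → Finset V),
    (∀ i, ε i ∈ E) ∧
    Function.Injective ε ∧
    (C 0).card = b ∧
    (∀ i : Fin E.card, C (i : ℕ) ⊆ C ((i : ℕ) + 1)) ∧
    C E.card = Finset.univ ∧
    (∀ i : Fin E.card, ε i ⊆ C ((i : ℕ) + 1)) ∧
    (∀ i : Fin E.card, (C ((i : ℕ) + 1)).card ≤ (C (i : ℕ)).card + 1) ∧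
    (∀ i : Fin E.card, C ((i : ℕ) + 1) \ C (i : ℕ) ⊆ ε i) ∧
    (∀ e ∈ E, ∃ v ∈ e, v ∉ C 0)

/-- Let `k ≥ 2` and let `G = (V, E)` be a `k`-uniform hypergraph of transfer type `b`
with `|E| = |V| − b + 1`.  Then `G` has a system of distinct representatives. -/
theorem stmt2 {V : Type*} [Fintype V] [DecidableEq V] (E : Finset (Finset V))
    (k b : ℕ) (hk : 2 ≤ k)
    (huniform : ∀ e ∈ E, e.card = k)
    (hfil : HasTransferFiltration E b)
    (hcard : (E.card : ℤ) = (Fintype.card V : ℤ) - (b : ℤ) + 1) :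
    HasSDR E := by
  classical
  obtain ⟨ε, C, hεE, hεinj, hC0, hmono, hCtop, hεsub, hstep, hdiff, _hout⟩ := hfil
  -- the chain is monotone
  have hchain : ∀ i j : ℕ, i ≤ j → j ≤ E.card → C i ⊆ C j := by
    intro i j hij hjm
    induction j with
    | zero =>
      have : i = 0 := by omega
      subst this; exact subset_rfl
    | succ n ih =>
      rcases Nat.lt_or_ge i (n + 1) with h | h
      · exact (ih (by omega) (by omega)).trans (hmono ⟨n, by omega⟩)
      · have : i = n + 1 := by omega
        subst this; exact subset_rfl
  have hbV : b ≤ Fintype.card V := by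
    rw [← hC0]
    exact (Finset.card_le_card (Finset.subset_univ _)).trans_eq Finset.card_univ
  have hm1 : 1 ≤ E.card := by omega
  -- telescoping sum
  have htel : ∑ i ∈ Finset.range E.card, (((C (i + 1)).card : ℤ) - ((C i).card : ℤ))
      = ((C E.card).card : ℤ) - ((C 0).card : ℤ) :=
    Finset.sum_range_sub (fun i => ((C i).card : ℤ)) E.card
  have hCm : (C E.card).card = Fintype.card V := by rw [hCtop, Finset.card_univ]
  have hsum : ∑ i ∈ Finset.range E.card, (((C (i + 1)).card : ℤ) - ((C i).card : ℤ))
      = (E.card : ℤ) - 1 := by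
    rw [htel, hCm, hC0]; omega
  -- cardinality of differences, as integers
  have hdcard : ∀ i : Fin E.card, (((C ((i : ℕ) + 1) \ C (i : ℕ)).card : ℤ))
      = ((C ((i : ℕ) + 1)).card : ℤ) - ((C (i : ℕ)).card : ℤ) := by
    intro i
    rw [Finset.card_sdiff_of_subset (hmono i)]
    have := Finset.card_le_card (hmono i)
    omega
  -- Hall's condition
  have hall : ∀ S : Finset (Fin E.card), S.card ≤ (S.biUnion ε).card := by
    intro S
    rcases S.eq_empty_or_nonempty with rfl | hS
    · simp
    set i0 := S.min' hS with hi0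
    -- the set of "new" vertices
    set N : Finset V := S.biUnion (fun i => C ((i : ℕ) + 1) \ C (i : ℕ)) with hN
    have hNsub : N ⊆ S.biUnion ε := by
      intro x hx
      rw [hN, Finset.mem_biUnion] at hx
      obtain ⟨i, hiS, hxi⟩ := hx
      exact Finset.mem_biUnion.mpr ⟨i, hiS, hdiff i hxi⟩
    have hNcard : ((N.card : ℤ)) = ∑ i ∈ S, (((C ((i : ℕ) + 1) \ C (i : ℕ)).card : ℤ)) := by
      rw [hN, Finset.card_biUnion]
      · push_cast; ring
      · intro i hi j hj hij
        have key : ∀ a c : Fin E.card, (a : ℕ) < (c : ℕ) →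
            Disjoint (C ((a : ℕ) + 1) \ C (a : ℕ)) (C ((c : ℕ) + 1) \ C (c : ℕ)) := by
          intro a c hac
          rw [Finset.disjoint_left]
          intro x hxa hxc
          have : x ∈ C (c : ℕ) :=
            hchain ((a : ℕ) + 1) (c : ℕ) hac (le_of_lt c.isLt) (Finset.mem_sdiff.mp hxa).1
          exact (Finset.mem_sdiff.mp hxc).2 this
        rcases lt_or_gt_of_ne (fun h => hij (Fin.ext h) : (i : ℕ) ≠ (j : ℕ)) with h | h
        · exact key i j h
        · exact (key j i h).symm
    -- lower bound on the sum of differences over S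
    have hSsum : (S.card : ℤ) - 1 ≤ ∑ i ∈ S, (((C ((i : ℕ) + 1) \ C (i : ℕ)).card : ℤ)) := by
      have hsplit : ∑ i ∈ Finset.univ \ S, (((C ((i : ℕ) + 1) \ C (i : ℕ)).card : ℤ))
          + ∑ i ∈ S, (((C ((i : ℕ) + 1) \ C (i : ℕ)).card : ℤ))
          = ∑ i ∈ (Finset.univ : Finset (Fin E.card)),
              (((C ((i : ℕ) + 1) \ C (i : ℕ)).card : ℤ)) :=
        Finset.sum_sdiff (Finset.subset_univ S)
      have huniv : ∑ i ∈ (Finset.univ : Finset (Fin E.card)),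
          (((C ((i : ℕ) + 1) \ C (i : ℕ)).card : ℤ)) = (E.card : ℤ) - 1 := by
        calc ∑ i ∈ (Finset.univ : Finset (Fin E.card)),
            (((C ((i : ℕ) + 1) \ C (i : ℕ)).card : ℤ))
            = ∑ i ∈ (Finset.univ : Finset (Fin E.card)),
              (((C ((i : ℕ) + 1)).card : ℤ) - ((C (i : ℕ)).card : ℤ)) :=
              Finset.sum_congr rfl (fun i _ => hdcard i)
          _ = ∑ i ∈ Finset.range E.card, (((C (i + 1)).card : ℤ) - ((C i).card : ℤ)) :=
              Fin.sum_univ_eq_sum_range (fun n => (((C (n + 1)).card : ℤ) - ((C n).card : ℤ)))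
                E.card
          _ = (E.card : ℤ) - 1 := hsum
      have hcompl : ∑ i ∈ Finset.univ \ S, (((C ((i : ℕ) + 1) \ C (i : ℕ)).card : ℤ))
          ≤ ((Finset.univ \ S).card : ℤ) := by
        calc ∑ i ∈ Finset.univ \ S, (((C ((i : ℕ) + 1) \ C (i : ℕ)).card : ℤ))
            ≤ ∑ _i ∈ Finset.univ \ S, (1 : ℤ) := by
              apply Finset.sum_le_sum
              intro i _
              have h1 := hstep i
              have h2 := hdcard i
              omega
          _ = ((Finset.univ \ S).card : ℤ) := by simp
      have hcardcompl : ((Finset.univ \ S).card : ℤ) = (E.card : ℤ) - (S.card : ℤ) := by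
        rw [Finset.card_sdiff_of_subset (Finset.subset_univ S)]
        have := Finset.card_le_card (Finset.subset_univ S)
        simp only [Finset.card_univ, Fintype.card_fin] at *
        omega
      omega
    -- an extra vertex of ε i0 inside C i0
    have hex : ∃ u ∈ ε i0, u ∈ C ((i0 : ℕ)) := by
      by_contra h
      push_neg at h
      have hsub : ε i0 ⊆ C ((i0 : ℕ) + 1) \ C ((i0 : ℕ)) := by
        intro x hx
        exact Finset.mem_sdiff.mpr ⟨hεsub i0 hx, h x hx⟩
      have h1 := Finset.card_le_card hsub
      have h2 := hstep i0
      have h3 := hdcard i0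
      have h4 := huniform (ε i0) (hεE i0)
      omega
    obtain ⟨u, huε, huC⟩ := hex
    have huN : u ∉ N := by
      intro hu
      rw [hN, Finset.mem_biUnion] at hu
      obtain ⟨i, hiS, hui⟩ := hu
      have : u ∈ C (i : ℕ) :=
        hchain (i0 : ℕ) (i : ℕ) (S.min'_le i hiS) (le_of_lt i.isLt) huC
      exact (Finset.mem_sdiff.mp hui).2 this
    have huU : u ∈ S.biUnion ε :=
      Finset.mem_biUnion.mpr ⟨i0, S.min'_mem hS, huε⟩
    have hins : insert u N ⊆ S.biUnion ε := by
      intro x hx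
      rcases Finset.mem_insert.mp hx with rfl | hx
      · exact huU
      · exact hNsub hx
    have h5 : (insert u N).card = N.card + 1 := Finset.card_insert_of_notMem huN
    have h6 := Finset.card_le_card hins
    have h7 : (S.card : ℤ) ≤ ((S.biUnion ε).card : ℤ) := by omega
    exact_mod_cast h7
  -- apply Hall's theorem
  obtain ⟨f, hfinj, hfmem⟩ := (Finset.all_card_le_biUnion_card_iff_exists_injective ε).mp hall
  have hVne : Nonempty V := by
    obtain ⟨v, hv⟩ := Finset.card_pos.mp
      (by rw [huniform (ε ⟨0, hm1⟩) (hεE ⟨0, hm1⟩)]; omega : 0 < (ε ⟨0, hm1⟩).card)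
    exact ⟨v⟩
  let ε' : Fin E.card → {e // e ∈ E} := fun i => ⟨ε i, hεE i⟩
  have hε'inj : Function.Injective ε' := fun i j h =>
    hεinj (congrArg Subtype.val h)
  have hε'bij : Function.Bijective ε' := by
    rw [Fintype.bijective_iff_injective_and_card]
    exact ⟨hε'inj, by simp [Fintype.card_coe]⟩
  let σ := Equiv.ofBijective ε' hε'bij
  obtain ⟨v0⟩ := hVne
  refine ⟨fun s => if h : s ∈ E then f (σ.symm ⟨s, h⟩) else v0, ?_, ?_⟩
  · intro s hs t ht hst
    simp only [Finset.mem_coe] at hs ht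
    simp only [dif_pos hs, dif_pos ht] at hst
    have := σ.symm.injective (hfinj hst)
    exact Subtype.ext_iff.mp this
  · intro e he
    simp only [dif_pos he]
    have h1 : ε (σ.symm ⟨e, he⟩) = e :=
      congrArg Subtype.val (σ.apply_symm_apply ⟨e, he⟩)
    have h2 := hfmem (σ.symm ⟨e, he⟩)
    rwa [h1] at h2
end

section
/- (Decoupling Lemma) Let G = (V, E) be a k-uniform hypergraph of transfer type b with m edges. Then there exist a k-uniform hypergraph G̃ = (Ṽ, Ẽ) of transfer type b with exactly m edges and with |Ṽ| = m + b vertices, and a surjective map p : Ṽ → V, such that for every edge ẽ ∈ Ẽ the image p(ẽ) = { p(w) : w ∈ ẽ } is an edge of G. -/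
/-- **Decoupling Lemma.**  Let `G = (V, E)` be a `k`-uniform hypergraph of transfer type
`b` with `m = |E|` edges.  Then there exist a `k`-uniform hypergraph `G̃` of transfer
type `b`, with exactly `m` edges and with `m + b` vertices (here realized on the vertex
type `Fin (m + b)`), together with a surjective map `p` from the vertices of `G̃` to `V`,
such that the image of every edge of `G̃` under `p` is an edge of `G`. -/
theorem stmt5 {V : Type*} [Fintype V] [DecidableEq V] (E : Finset (Finset V))
    (k b : ℕ)
    (huniform : ∀ e ∈ E, e.card = k)
    (hfil : HasTransferFiltration E b) :
    ∃ (E' : Finset (Finset (Fin (E.card + b)))) (p : Fin (E.card + b) → V),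
      (∀ e ∈ E', e.card = k) ∧
      E'.card = E.card ∧
      HasTransferFiltration E' b ∧
      Function.Surjective p ∧
      (∀ e ∈ E', e.image p ∈ E) := by
  classical
  obtain ⟨ε, C, h1, h2, h3, h4, h5, h6, h7, h8, h9⟩ := hfil
  have hm : E.card = E.card := rfl
  -- monotonicity of the chain
  have hmono : ∀ c : ℕ, c ≤ E.card → ∀ a : ℕ, a ≤ c → C a ⊆ C c := by
    intro c
    induction c with
    | zero =>
      intro _ a ha
      have : a = 0 := by omega
      subst this; exact subset_rfl
    | succ n ih =>
      intro hcm a ha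
      rcases Nat.lt_or_ge a (n+1) with h | h
      · exact (ih (by omega) a (by omega)).trans (h4 ⟨n, by omega⟩)
      · have : a = n + 1 := by omega
        subst this; exact subset_rfl
  -- choice of the "new vertex" of each edge
  have hwspec : ∀ i : Fin E.card, ∃ v, v ∈ ε i ∧ v ∉ C 0 ∧
      ∀ u, u ∈ C ((i:ℕ)+1) → u ∉ C (i:ℕ) → u = v := by
    intro i
    by_cases hne : (C ((i:ℕ)+1) \ C (i:ℕ)).Nonempty
    · obtain ⟨v, hv⟩ := hne
      have hv' := Finset.mem_sdiff.mp hv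
      refine ⟨v, h8 i hv, fun h0 => hv'.2 (hmono (i:ℕ) (le_of_lt i.isLt) 0 (Nat.zero_le _) h0), ?_⟩
      intro u hu1 hu2
      have hcard : (C ((i:ℕ)+1) \ C (i:ℕ)).card ≤ 1 := by
        rw [Finset.card_sdiff_of_subset (h4 i)]
        have := h7 i
        omega
      exact Finset.card_le_one.mp hcard u (Finset.mem_sdiff.mpr ⟨hu1, hu2⟩) v hv
    · obtain ⟨v, hv1, hv2⟩ := h9 (ε i) (h1 i)
      exact ⟨v, hv1, hv2, fun u hu1 hu2 => absurd ⟨u, Finset.mem_sdiff.mpr ⟨hu1, hu2⟩⟩ hne⟩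
  choose w hw1 hw2 hw3 using hwspec
  -- first entry index of a vertex outside the foundation
  have hidxaux : ∀ n : ℕ, n ≤ E.card → ∀ v, v ∈ C n → v ∉ C 0 →
      ∃ j : Fin E.card, v ∈ C ((j:ℕ)+1) ∧ v ∉ C (j:ℕ) := by
    intro n
    induction n with
    | zero => exact fun _ v hv hv0 => absurd hv hv0
    | succ n ih =>
      intro hn v hv hv0
      by_cases h : v ∈ C n
      · exact ih (by omega) v h hv0
      · exact ⟨⟨n, by omega⟩, hv, h⟩
  have hidx0 : ∀ v : V, v ∉ C 0 → ∃ j : Fin E.card, v ∈ C ((j:ℕ)+1) ∧ v ∉ C (j:ℕ) :=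
    fun v hv => hidxaux E.card le_rfl v (by rw [h5]; exact Finset.mem_univ v) hv
  choose idx hidx1 hidx2 using hidx0
  have hwidx : ∀ v (hv : v ∉ C 0), w (idx v hv) = v :=
    fun v hv => (hw3 (idx v hv) v (hidx1 v hv) (hidx2 v hv)).symm
  -- the foundation equivalence
  set g : {x // x ∈ C 0} ≃ Fin b :=
    Fintype.equivFinOfCardEq (by rw [Fintype.card_coe]; exact h3) with hg
  -- the projection and its section
  set p : Fin (E.card + b) → V := fun x =>
    if h : (x:ℕ) < E.card then w ⟨(x:ℕ), h⟩
    else (g.symm ⟨(x:ℕ) - E.card, by have := x.isLt; omega⟩ : V) with hp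
  set q : V → Fin (E.card + b) := fun v =>
    if hv : v ∈ C 0 then ⟨E.card + (g ⟨v, hv⟩ : ℕ), by have := (g ⟨v, hv⟩).isLt; omega⟩
    else ⟨(idx v hv : ℕ), by have := (idx v hv).isLt; omega⟩ with hq
  have hq_ge : ∀ v (hv : v ∈ C 0), (q v : ℕ) = E.card + (g ⟨v, hv⟩ : ℕ) := by
    intro v hv
    rw [hq]; simp only [dif_pos hv]
  have hq_lt : ∀ v (hv : v ∉ C 0), (q v : ℕ) = (idx v hv : ℕ) := by
    intro v hv
    rw [hq]; simp only [dif_neg hv]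
  have hpq : ∀ v, p (q v) = v := by
    intro v
    rw [hp]
    by_cases hv : v ∈ C 0
    · have hge := hq_ge v hv
      simp only
      rw [dif_neg (by omega)]
      have : ((q v : ℕ) - E.card) = (g ⟨v, hv⟩ : ℕ) := by omega
      simp only [this, Fin.eta]
      exact congrArg Subtype.val (g.symm_apply_apply ⟨v, hv⟩)
    · have hlt := hq_lt v hv
      have hltm : (q v : ℕ) < E.card := by
        rw [hlt]; exact (idx v hv).isLt
      simp only
      rw [dif_pos hltm]
      have : (⟨(q v : ℕ), hltm⟩ : Fin E.card) = idx v hv := Fin.ext (by rw [hlt])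
      rw [this]
      exact hwidx v hv
  -- the lifted edges
  set t : Fin E.card → V → Fin (E.card + b) := fun i v =>
    if v = w i then ⟨(i:ℕ), by have := i.isLt; omega⟩ else q v with ht
  set F : Fin E.card → Finset (Fin (E.card + b)) := fun i => (ε i).image (t i) with hF
  have hpt : ∀ (i : Fin E.card), ∀ v ∈ ε i, p (t i v) = v := by
    intro i v hv
    rw [ht]
    by_cases hvw : v = w i
    · simp only [if_pos hvw, hp]
      rw [dif_pos i.isLt]
      simp only [Fin.eta]
      exact hvw.symm
    · simp only [if_neg hvw]
      exact hpq v
  have htinj : ∀ i : Fin E.card, Set.InjOn (t i) (ε i) := by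
    intro i a ha c hc hac
    rw [← hpt i a ha, ← hpt i c hc, hac]
  have hFcard : ∀ i : Fin E.card, (F i).card = k := by
    intro i
    rw [hF]
    simp only
    rw [Finset.card_image_of_injOn (htinj i)]
    exact huniform (ε i) (h1 i)
  have hmemi : ∀ i : Fin E.card, (⟨(i:ℕ), by have := i.isLt; omega⟩ : Fin (E.card + b)) ∈ F i := by
    intro i
    rw [hF]
    simp only
    refine Finset.mem_image.mpr ⟨w i, hw1 i, ?_⟩
    rw [ht]; simp
  have hqlt2 : ∀ v (hv : v ∉ C 0), ∀ n : ℕ, n ≤ E.card → v ∈ C n → (q v : ℕ) < n := by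
    intro v hv n hn hvn
    by_contra h
    push_neg at h
    have h1' : v ∈ C (q v : ℕ) := by
      have : (q v : ℕ) ≤ E.card := by
        rw [hq_lt v hv]; exact le_of_lt (idx v hv).isLt
      exact hmono (q v : ℕ) this n h hvn
    rw [hq_lt v hv] at h1'
    exact hidx2 v hv h1'
  have hlt : ∀ i : Fin E.card, ∀ x ∈ F i, (x:ℕ) < (i:ℕ) + 1 ∨ E.card ≤ (x:ℕ) := by
    intro i x hx
    rw [hF] at hx
    simp only [Finset.mem_image] at hx
    obtain ⟨v, hv, rfl⟩ := hx
    rw [ht]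
    by_cases hvw : v = w i
    · simp only [if_pos hvw]
      left; omega
    · simp only [if_neg hvw]
      by_cases hv0 : v ∈ C 0
      · right
        rw [hq_ge v hv0]
        omega
      · left
        have hvi : v ∈ C (i:ℕ) := by
          by_contra hvi
          exact hvw (hw3 i v (h6 i hv) hvi)
        have := hqlt2 v hv0 (i:ℕ) (le_of_lt i.isLt) hvi
        omega
  have hFinj : Function.Injective F := by
    have key : ∀ i j : Fin E.card, (i:ℕ) < (j:ℕ) → F i ≠ F j := by
      intro i j hij heq
      have hj := hmemi j
      rw [← heq] at hj
      have := hlt i _ hj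
      simp only at this
      have hjm := j.isLt
      omega
    intro i j heq
    by_contra hij
    rcases Nat.lt_trichotomy (i:ℕ) (j:ℕ) with h | h | h
    · exact key i j h heq
    · exact hij (Fin.ext h)
    · exact key j i h heq.symm
  refine ⟨Finset.image F Finset.univ, p, ?_, ?_, ?_, ?_, ?_⟩
  · intro e he
    obtain ⟨i, _, rfl⟩ := Finset.mem_image.mp he
    exact hFcard i
  · rw [Finset.card_image_of_injective _ hFinj, Finset.card_univ, Fintype.card_fin]
  · -- the transfer filtration on the decoupled hypergraph
    have hE'card : (Finset.image F Finset.univ).card = E.card := by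
      rw [Finset.card_image_of_injective _ hFinj, Finset.card_univ, Fintype.card_fin]
    refine ⟨fun j => F (Fin.cast hE'card j),
      fun n => Finset.filter (fun x : Fin (E.card + b) => (x:ℕ) < n ∨ E.card ≤ (x:ℕ))
        Finset.univ,
      ?_, ?_, ?_, ?_, ?_, ?_, ?_, ?_, ?_⟩
    · intro j
      exact Finset.mem_image_of_mem F (Finset.mem_univ _)
    · intro a c h
      exact Fin.cast_injective hE'card (hFinj h)
    · have himg : Finset.filter
          (fun x : Fin (E.card + b) => (x:ℕ) < 0 ∨ E.card ≤ (x:ℕ)) Finset.univ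
          = Finset.image (fun j : Fin b =>
              (⟨E.card + (j:ℕ), by have := j.isLt; omega⟩ : Fin (E.card + b)))
            Finset.univ := by
        ext x
        simp only [Finset.mem_filter, Finset.mem_univ, true_and, Finset.mem_image]
        constructor
        · rintro (h | h)
          · exact absurd h (by omega)
          · exact ⟨⟨(x:ℕ) - E.card, by have := x.isLt; omega⟩,
              Fin.ext (show E.card + ((x:ℕ) - E.card) = (x:ℕ) from by omega)⟩
        · rintro ⟨j, rfl⟩
          right
          exact Nat.le_add_right _ _
      simp only
      rw [himg, Finset.card_image_of_injective _ (fun a c h => Fin.ext (by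
          have h2 : E.card + (a:ℕ) = E.card + (c:ℕ) := congrArg Fin.val h
          omega)), Finset.card_univ, Fintype.card_fin]
    · intro i x hx
      simp only [Finset.mem_filter, Finset.mem_univ, true_and] at hx ⊢
      omega
    · rw [hE'card]
      ext x
      simp only [Finset.mem_filter, Finset.mem_univ, true_and, iff_true]
      have := x.isLt
      omega
    · intro j x hx
      have h' := hlt (Fin.cast hE'card j) x hx
      rw [Fin.coe_cast] at h'
      exact Finset.mem_filter.mpr ⟨Finset.mem_univ _, h'⟩
    · intro i
      have hi : (i:ℕ) < E.card := lt_of_lt_of_eq i.isLt hE'card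
      have hsub : Finset.filter
          (fun x : Fin (E.card + b) => (x:ℕ) < (i:ℕ) + 1 ∨ E.card ≤ (x:ℕ)) Finset.univ ⊆
          insert (⟨(i:ℕ), by omega⟩ : Fin (E.card + b))
            (Finset.filter (fun x : Fin (E.card + b) => (x:ℕ) < (i:ℕ) ∨ E.card ≤ (x:ℕ))
              Finset.univ) := by
        intro x hx
        simp only [Finset.mem_filter, Finset.mem_univ, true_and] at hx
        simp only [Finset.mem_insert, Finset.mem_filter, Finset.mem_univ, true_and]
        by_cases hxi : (x:ℕ) = (i:ℕ)
        · exact Or.inl (Fin.ext hxi)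
        · right; omega
      exact le_trans (Finset.card_le_card hsub) (Finset.card_insert_le _ _)
    · intro i x hx
      have hx' := Finset.mem_sdiff.mp hx
      simp only [Finset.mem_filter, Finset.mem_univ, true_and, not_or, not_lt] at hx'
      have hxi : (x:ℕ) = (i:ℕ) := by omega
      have hi : (i:ℕ) < E.card := lt_of_lt_of_eq i.isLt hE'card
      have hxx : x = ⟨(i:ℕ), by omega⟩ := Fin.ext hxi
      rw [hxx]
      exact hmemi (Fin.cast hE'card i)
    · intro e he
      obtain ⟨i, -, rfl⟩ := Finset.mem_image.mp he
      refine ⟨⟨(i:ℕ), by have := i.isLt; omega⟩, hmemi i, ?_⟩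
      simp only [Finset.mem_filter, Finset.mem_univ, true_and, not_or, not_lt]
      have := i.isLt
      omega
  · intro v
    exact ⟨q v, hpq v⟩
  · intro e he
    obtain ⟨i, _, rfl⟩ := Finset.mem_image.mp he
    rw [Finset.image_image]
    have himg : Finset.image (p ∘ t i) (ε i) = ε i := by
      have hcg := Finset.image_congr (f := p ∘ t i) (g := id) (s := ε i)
        (fun v hv => hpt i v hv)
      rw [hcg, Finset.image_id]
    rw [himg]
    exact h1 i
end

section
/- Let G = (V, E) be a connected 3-uniform hypergraph with at least one edge and no isolated vertices such that |E| = |V|, G has a system of distinct representatives, and any two distinct edges of G that intersect do so in exactly 2 vertices. Then G is the 3-uniform cycle of length 4; that is, |V| = 4 and E consists of all four 3-element subsets of V. -/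
lemma aux_eq3 {V : Type*} [DecidableEq V] {g : Finset V} {p q r : V} (h3 : g.card = 3)
    (hp : p ∈ g) (hq : q ∈ g) (hr : r ∈ g) (hpq : p ≠ q) (hpr : p ≠ r) (hqr : q ≠ r) :
    g = {p, q, r} := by
  refine (Finset.eq_of_subset_of_card_le ?_ ?_).symm
  · simp [Finset.insert_subset_iff, hp, hq, hr]
  · rw [h3, Finset.card_insert_of_notMem (by simp [hpq, hpr]),
      Finset.card_insert_of_notMem (by simp [hqr]), Finset.card_singleton]

lemma aux_third {V : Type*} [DecidableEq V] {e : Finset V} {a b : V} (hab : a ≠ b)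
    (ha : a ∈ e) (hb : b ∈ e) (h3 : e.card = 3) :
    ∃ c, c ≠ a ∧ c ≠ b ∧ e = {a, b, c} := by
  have h2 : ({a, b} : Finset V) ⊆ e := by simp [Finset.insert_subset_iff, ha, hb]
  have h1 : (e \ {a, b}).card = 1 := by
    rw [Finset.card_sdiff_of_subset h2, Finset.card_pair hab, h3]
  obtain ⟨c, hc⟩ := Finset.card_eq_one.mp h1
  have hce : c ∈ e \ ({a, b} : Finset V) := by rw [hc]; exact Finset.mem_singleton_self c
  simp only [Finset.mem_sdiff, Finset.mem_insert, Finset.mem_singleton, not_or] at hce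
  exact ⟨c, hce.2.1, hce.2.2, aux_eq3 h3 ha hb hce.1 hab (Ne.symm hce.2.1) (Ne.symm hce.2.2)⟩

lemma aux_closure {V : Type*} [DecidableEq V] (E : Finset (Finset V))
    (hconn : ∀ u v : V, Relation.ReflTransGen (fun a b : V => ∃ e ∈ E, a ∈ e ∧ b ∈ e) u v)
    (hne' : ∀ g ∈ E, g.Nonempty)
    (F : Finset V → Prop)
    (hclosed : ∀ g ∈ E, ∀ f, F f → (g ∩ f).Nonempty → F g)
    (f0 : Finset V) (hf0 : F f0) (a : V) (ha : a ∈ f0) :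
    (∀ v : V, ∃ f, F f ∧ v ∈ f) ∧ (∀ g ∈ E, F g) := by
  have Hv : ∀ v : V, ∃ f, F f ∧ v ∈ f := by
    intro v
    have h := hconn v a
    induction h using Relation.ReflTransGen.head_induction_on with
    | refl => exact ⟨f0, hf0, ha⟩
    | head hxy _ ih =>
        obtain ⟨f, hf, hyf⟩ := ih
        obtain ⟨e, heE, hxe, hye⟩ := hxy
        exact ⟨e, hclosed e heE f hf ⟨_, Finset.mem_inter.mpr ⟨hye, hyf⟩⟩, hxe⟩
  refine ⟨Hv, fun g hg => ?_⟩
  obtain ⟨x, hx⟩ := hne' g hg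
  obtain ⟨f, hf, hxf⟩ := Hv x
  exact hclosed g hg f hf ⟨x, Finset.mem_inter.mpr ⟨hx, hxf⟩⟩

lemma aux_kill {V : Type*} [Fintype V] [DecidableEq V] (E : Finset (Finset V))
    (hint : ∀ e ∈ E, ∀ e' ∈ E, e ≠ e' → (e ∩ e').Nonempty → (e ∩ e').card = 2)
    (huniform : ∀ e ∈ E, e.card = 3)
    {a b c1 c2 c3 : V} {e1 e2 e3 g : Finset V}
    (h1 : e1 ∈ E) (h2 : e2 ∈ E) (h3 : e3 ∈ E) (hg : g ∈ E)
    (he1 : e1 = {a, b, c1}) (he2 : e2 = {a, b, c2}) (he3 : e3 = {a, b, c3})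
    (hc1a : c1 ≠ a) (hc2a : c2 ≠ a) (hc3a : c3 ≠ a)
    (h12 : c1 ≠ c2) (h13 : c1 ≠ c3) (h23 : c2 ≠ c3)
    (hag : a ∈ g) (hbg : b ∉ g) : False := by
  have key : ∀ (c : V) (e : Finset V), e ∈ E → e = {a, b, c} → c ∈ g := by
    intro c e heE he
    have hgne : g ≠ e := fun h => hbg (h ▸ (by rw [he]; simp))
    have hcap := hint g hg e heE hgne ⟨a, Finset.mem_inter.mpr ⟨hag, by rw [he]; simp⟩⟩
    have hsub : g ∩ e ⊆ {a, c} := by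
      intro x hx
      rw [Finset.mem_inter, he] at hx
      have := hx.2
      simp only [Finset.mem_insert, Finset.mem_singleton] at this ⊢
      rcases this with h | h | h
      · exact Or.inl h
      · exact absurd (h ▸ hx.1) hbg
      · exact Or.inr h
    have heq : g ∩ e = {a, c} := Finset.eq_of_subset_of_card_le hsub
      (le_trans (Finset.card_insert_le a {c}) (by simp [hcap]))
    have : c ∈ g ∩ e := by rw [heq]; simp
    exact (Finset.mem_inter.mp this).1
  have hc1 := key c1 e1 h1 he1
  have hc2 := key c2 e2 h2 he2
  have hc3 := key c3 e3 h3 he3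
  have hsub : ({a, c1, c2, c3} : Finset V) ⊆ g := by
    simp [Finset.insert_subset_iff, hag, hc1, hc2, hc3]
  have hcard4 : ({a, c1, c2, c3} : Finset V).card = 4 := by
    rw [Finset.card_insert_of_notMem (by simp [Ne.symm hc1a, Ne.symm hc2a, Ne.symm hc3a]),
      Finset.card_insert_of_notMem (by simp [h12, h13]),
      Finset.card_insert_of_notMem (by simp [h23]), Finset.card_singleton]
  have := Finset.card_le_card hsub
  rw [hcard4, huniform g hg] at this
  omega

lemma aux_no_three {V : Type*} [Fintype V] [DecidableEq V] (E : Finset (Finset V))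
    (huniform : ∀ e ∈ E, e.card = 3)
    (hconn : ∀ u v : V, Relation.ReflTransGen (fun a b : V => ∃ e ∈ E, a ∈ e ∧ b ∈ e) u v)
    (hcard : E.card = Fintype.card V)
    (hint : ∀ e ∈ E, ∀ e' ∈ E, e ≠ e' → (e ∩ e').Nonempty → (e ∩ e').card = 2)
    {a b : V} (hab : a ≠ b) {e1 e2 e3 : Finset V}
    (h1 : e1 ∈ E) (h2 : e2 ∈ E) (h3 : e3 ∈ E)
    (h12 : e1 ≠ e2) (h13 : e1 ≠ e3) (h23 : e2 ≠ e3)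
    (ha1 : a ∈ e1) (hb1 : b ∈ e1) (ha2 : a ∈ e2) (hb2 : b ∈ e2)
    (ha3 : a ∈ e3) (hb3 : b ∈ e3) : False := by
  have hne' : ∀ g ∈ E, g.Nonempty := fun g hg =>
    Finset.card_pos.mp (by rw [huniform g hg]; norm_num)
  obtain ⟨c1, hc1a, hc1b, hec1⟩ := aux_third hab ha1 hb1 (huniform e1 h1)
  obtain ⟨c2, hc2a, hc2b, hec2⟩ := aux_third hab ha2 hb2 (huniform e2 h2)
  obtain ⟨c3, hc3a, hc3b, hec3⟩ := aux_third hab ha3 hb3 (huniform e3 h3)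
  have hcc12 : c1 ≠ c2 := fun h => h12 (by rw [hec1, hec2, h])
  have hcc13 : c1 ≠ c3 := fun h => h13 (by rw [hec1, hec3, h])
  have hcc23 : c2 ≠ c3 := fun h => h23 (by rw [hec2, hec3, h])
  -- key: any edge containing a or b contains both
  have key : ∀ g ∈ E, (a ∈ g ∨ b ∈ g) → a ∈ g ∧ b ∈ g := by
    intro g hg hor
    rcases hor with hag | hbg
    · refine ⟨hag, ?_⟩
      by_contra hbg
      exact aux_kill E hint huniform h1 h2 h3 hg hec1 hec2 hec3 hc1a hc2a hc3a
        hcc12 hcc13 hcc23 hag hbg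
    · refine ⟨?_, hbg⟩
      by_contra hag
      have hec1' : e1 = {b, a, c1} := by rw [hec1]; exact Finset.insert_comm a b {c1}
      have hec2' : e2 = {b, a, c2} := by rw [hec2]; exact Finset.insert_comm a b {c2}
      have hec3' : e3 = {b, a, c3} := by rw [hec3]; exact Finset.insert_comm a b {c3}
      exact aux_kill E hint huniform h1 h2 h3 hg hec1' hec2' hec3' hc1b hc2b hc3b
        hcc12 hcc13 hcc23 hbg hag
  -- the family F of edges containing a and b is closed
  set F : Finset V → Prop := fun f => f ∈ E ∧ a ∈ f ∧ b ∈ f with hF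
  have hclosed : ∀ g ∈ E, ∀ f, F f → (g ∩ f).Nonempty → F g := by
    intro g hg f hf hgf
    rcases eq_or_ne g f with rfl | hgfne
    · exact ⟨hg, hf.2⟩
    obtain ⟨cf, hcfa, hcfb, hecf⟩ := aux_third hab hf.2.1 hf.2.2 (huniform f hf.1)
    have hcap := hint g hg f hf.1 hgfne hgf
    have hns : ¬ (g ∩ f ⊆ {cf}) := by
      intro hsub
      have := Finset.card_le_card hsub
      rw [hcap, Finset.card_singleton] at this
      omega
    obtain ⟨y, hy, hy'⟩ := Finset.not_subset.mp hns
    rw [Finset.mem_inter] at hy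
    have hyf := hy.2
    rw [hecf] at hyf
    simp only [Finset.mem_insert, Finset.mem_singleton] at hyf hy'
    have hor : a ∈ g ∨ b ∈ g := by
      rcases hyf with rfl | rfl | rfl
      · exact Or.inl hy.1
      · exact Or.inr hy.1
      · exact absurd rfl hy'
    exact ⟨hg, key g hg hor⟩
  obtain ⟨Hv, HE⟩ := aux_closure E hconn hne' F hclosed e1 ⟨h1, ha1, hb1⟩ a ha1
  -- now count: map each edge to its third vertex
  have hthird : ∀ e ∈ E, ∃ c, c ≠ a ∧ c ≠ b ∧ e = {a, b, c} := by
    intro e he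
    exact aux_third hab (HE e he).2.1 (HE e he).2.2 (huniform e he)
  have hbij : E.card = (Finset.univ \ {a, b} : Finset V).card := by
    apply Finset.card_bij (fun e he => (hthird e he).choose)
    · intro e he
      obtain ⟨hca, hcb, -⟩ := (hthird e he).choose_spec
      simp [hca, hcb]
    · intro e he e' he' h
      have h1 := (hthird e he).choose_spec.2.2
      have h2 := (hthird e' he').choose_spec.2.2
      rw [h1, h2, h]
    · intro v hv
      simp only [Finset.mem_sdiff, Finset.mem_univ, true_and, Finset.mem_insert,
        Finset.mem_singleton, not_or] at hv
      obtain ⟨f, hf, hvf⟩ := Hv v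
      refine ⟨f, hf.1, Eq.symm ?_⟩
      have hspec := (hthird f hf.1).choose_spec.2.2
      rw [hspec] at hvf
      simp only [Finset.mem_insert, Finset.mem_singleton] at hvf
      rcases hvf with rfl | rfl | h
      · exact absurd rfl hv.1
      · exact absurd rfl hv.2
      · exact h
  have hsd : (Finset.univ \ {a, b} : Finset V).card = Fintype.card V - 2 := by
    rw [Finset.card_sdiff_of_subset (Finset.subset_univ _), Finset.card_pair hab, Finset.card_univ]
  have hge : 2 ≤ Fintype.card V := by
    have := Finset.card_le_univ ({a, b} : Finset V)
    rw [Finset.card_pair hab] at this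
    exact this
  rw [hcard, hsd] at hbij
  omega


/-- Let `G = (V, E)` be a connected 3-uniform hypergraph with at least one edge and no
isolated vertices such that `|E| = |V|`, `G` has a system of distinct representatives,
and any two distinct edges of `G` that intersect do so in exactly 2 vertices.  Then `G`
is the 3-uniform cycle of length 4: `|V| = 4` and `E` consists of all four 3-element
subsets of `V`. -/
theorem stmt8 {V : Type*} [Fintype V] [DecidableEq V] (E : Finset (Finset V))
    (huniform : ∀ e ∈ E, e.card = 3)
    (hne : E.Nonempty)
    (hiso : ∀ v : V, ∃ e ∈ E, v ∈ e)
    (hconn : ∀ u v : V,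
      Relation.ReflTransGen (fun a b : V => ∃ e ∈ E, a ∈ e ∧ b ∈ e) u v)
    (hcard : E.card = Fintype.card V)
    (hsdr : HasSDR E)
    (hint : ∀ e ∈ E, ∀ e' ∈ E, e ≠ e' → (e ∩ e').Nonempty → (e ∩ e').card = 2) :
    Fintype.card V = 4 ∧ E = (Finset.univ : Finset V).powersetCard 3 := by
  classical
  obtain ⟨e1, he1⟩ := hne
  have hne' : ∀ g ∈ E, g.Nonempty := fun g hg =>
    Finset.card_pos.mp (by rw [huniform g hg]; norm_num)
  obtain ⟨a0, ha0⟩ := hne' e1 he1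
  -- there is a second edge meeting e1
  by_cases hex : ∃ e2 ∈ E, e2 ≠ e1 ∧ (e2 ∩ e1).Nonempty
  swap
  · exfalso
    push_neg at hex
    have hclosed : ∀ g ∈ E, ∀ f, f = e1 → (g ∩ f).Nonempty → g = e1 := by
      intro g hg f hf hgf
      subst hf
      by_contra hne2
      exact (Finset.nonempty_iff_ne_empty.mp hgf) (hex g hg hne2)
    obtain ⟨Hv, HE⟩ := aux_closure E hconn hne' (fun f => f = e1) hclosed e1 rfl a0 ha0
    have hV3 : Fintype.card V ≤ 3 := by
      rw [← huniform e1 he1, ← Finset.card_univ]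
      apply Finset.card_le_card
      intro v _
      obtain ⟨f, rfl, hvf⟩ := Hv v
      exact hvf
    have hE1 : E = {e1} := by
      apply Finset.eq_of_subset_of_card_le
      · intro g hg
        rw [Finset.mem_singleton]
        exact HE g hg
      · rw [Finset.card_singleton, hcard]
        have := Finset.card_le_univ e1
        rw [huniform e1 he1] at this
        omega
    rw [hE1, Finset.card_singleton] at hcard
    have := Finset.card_le_univ e1
    rw [huniform e1 he1] at this
    omega
  obtain ⟨e2, he2, hne12, hint12⟩ := hex
  have hcap12 : (e2 ∩ e1).card = 2 := hint e2 he2 e1 he1 hne12 hint12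
  obtain ⟨a, b, hab, hab_eq⟩ := Finset.card_eq_two.mp hcap12
  have ha1 : a ∈ e1 := (Finset.mem_inter.mp (by rw [hab_eq]; simp : a ∈ e2 ∩ e1)).2
  have ha2 : a ∈ e2 := (Finset.mem_inter.mp (by rw [hab_eq]; simp : a ∈ e2 ∩ e1)).1
  have hb1 : b ∈ e1 := (Finset.mem_inter.mp (by rw [hab_eq]; simp : b ∈ e2 ∩ e1)).2
  have hb2 : b ∈ e2 := (Finset.mem_inter.mp (by rw [hab_eq]; simp : b ∈ e2 ∩ e1)).1
  obtain ⟨c, hca, hcb, hec⟩ := aux_third hab ha1 hb1 (huniform e1 he1)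
  obtain ⟨d, hda, hdb, hed⟩ := aux_third hab ha2 hb2 (huniform e2 he2)
  have hc1 : c ∈ e1 := by rw [hec]; simp
  have hd2 : d ∈ e2 := by rw [hed]; simp
  have hcne2 : c ∉ e2 := by
    intro h
    have : c ∈ e2 ∩ e1 := Finset.mem_inter.mpr ⟨h, hc1⟩
    rw [hab_eq] at this
    simp only [Finset.mem_insert, Finset.mem_singleton] at this
    rcases this with h' | h' <;> [exact hca h'; exact hcb h']
  have hdne1 : d ∉ e1 := by
    intro h
    have : d ∈ e2 ∩ e1 := Finset.mem_inter.mpr ⟨hd2, h⟩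
    rw [hab_eq] at this
    simp only [Finset.mem_insert, Finset.mem_singleton] at this
    rcases this with h' | h' <;> [exact hda h'; exact hdb h']
  have hcd : c ≠ d := fun h => hcne2 (h ▸ hd2)
  set S : Finset V := {a, b, c, d} with hS
  have he1S : e1 ⊆ S := by rw [hec, hS]; intro x hx; simp at hx ⊢; tauto
  have he2S : e2 ⊆ S := by rw [hed, hS]; intro x hx; simp at hx ⊢; tauto
  -- the single-vertex-intersection contradiction
  have single : ∀ g ∈ E, ∀ e ∈ E, g ≠ e → ∀ x, x ∈ g → x ∈ e → g ∩ e ⊆ {x} → False := by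
    intro g hg e he hgne x hxg hxe hsub
    have h2 := hint g hg e he hgne ⟨x, Finset.mem_inter.mpr ⟨hxg, hxe⟩⟩
    have := Finset.card_le_card hsub
    rw [h2, Finset.card_singleton] at this
    omega
  -- closure property: any edge meeting an edge inside S is inside S
  have hclosed : ∀ g ∈ E, ∀ f, (f ∈ E ∧ f ⊆ S) → (g ∩ f).Nonempty → g ∈ E ∧ g ⊆ S := by
    intro g hg f hf hgf
    rcases eq_or_ne g f with rfl | hgfne
    · exact ⟨hg, hf.2⟩
    refine ⟨hg, ?_⟩
    intro z hzg
    by_contra hzS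
    have hze1 : z ∉ e1 := fun h => hzS (he1S h)
    have hze2 : z ∉ e2 := fun h => hzS (he2S h)
    have hgne1 : g ≠ e1 := fun h => hze1 (h ▸ hzg)
    have hgne2 : g ≠ e2 := fun h => hze2 (h ▸ hzg)
    have hza : z ≠ a := fun h => hzS (by rw [h, hS]; simp)
    have hzb : z ≠ b := fun h => hzS (by rw [h, hS]; simp)
    have hzc : z ≠ c := fun h => hzS (by rw [h, hS]; simp)
    have hzd : z ≠ d := fun h => hzS (by rw [h, hS]; simp)
    -- pairwise impossibilities
    have Hab : ¬ (a ∈ g ∧ b ∈ g) := by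
      rintro ⟨hga, hgb⟩
      exact aux_no_three E huniform hconn hcard hint hab hg he1 he2
        hgne1 hgne2 hne12.symm hga hgb ha1 hb1 ha2 hb2
    have Hcd : ¬ (c ∈ g ∧ d ∈ g) := by
      rintro ⟨hgc, hgd⟩
      have hgeq : g = {c, d, z} := aux_eq3 (huniform g hg) hgc hgd hzg hcd
        (Ne.symm hzc) (Ne.symm hzd)
      refine single g hg e1 he1 hgne1 c hgc hc1 ?_
      intro w hw
      rw [Finset.mem_inter, hgeq] at hw
      simp only [Finset.mem_insert, Finset.mem_singleton] at hw ⊢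
      rcases hw.1 with rfl | rfl | rfl
      · rfl
      · exact absurd hw.2 hdne1
      · exact absurd hw.2 hze1
    have Hac : ¬ (a ∈ g ∧ c ∈ g) := by
      rintro ⟨hga, hgc⟩
      refine single g hg e2 he2 hgne2 a hga ha2 ?_
      intro w hw
      rw [Finset.mem_inter, hed] at hw
      simp only [Finset.mem_insert, Finset.mem_singleton] at hw ⊢
      rcases hw.2 with rfl | rfl | rfl
      · rfl
      · exact absurd ⟨hga, hw.1⟩ Hab
      · exact absurd ⟨hgc, hw.1⟩ Hcd
    have Had : ¬ (a ∈ g ∧ d ∈ g) := by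
      rintro ⟨hga, hgd⟩
      refine single g hg e1 he1 hgne1 a hga ha1 ?_
      intro w hw
      rw [Finset.mem_inter, hec] at hw
      simp only [Finset.mem_insert, Finset.mem_singleton] at hw ⊢
      rcases hw.2 with rfl | rfl | rfl
      · rfl
      · exact absurd ⟨hga, hw.1⟩ Hab
      · exact absurd ⟨hw.1, hgd⟩ Hcd
    have Hbc : ¬ (b ∈ g ∧ c ∈ g) := by
      rintro ⟨hgb, hgc⟩
      refine single g hg e2 he2 hgne2 b hgb hb2 ?_
      intro w hw
      rw [Finset.mem_inter, hed] at hw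
      simp only [Finset.mem_insert, Finset.mem_singleton] at hw ⊢
      rcases hw.2 with rfl | rfl | rfl
      · exact absurd ⟨hw.1, hgb⟩ Hab
      · rfl
      · exact absurd ⟨hgc, hw.1⟩ Hcd
    have Hbd : ¬ (b ∈ g ∧ d ∈ g) := by
      rintro ⟨hgb, hgd⟩
      refine single g hg e1 he1 hgne1 b hgb hb1 ?_
      intro w hw
      rw [Finset.mem_inter, hec] at hw
      simp only [Finset.mem_insert, Finset.mem_singleton] at hw ⊢
      rcases hw.2 with rfl | rfl | rfl
      · exact absurd ⟨hw.1, hgb⟩ Hab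
      · rfl
      · exact absurd ⟨hw.1, hgd⟩ Hcd
    -- extract two distinct elements of g ∩ f, both in S
    have hcapgf := hint g hg f hf.1 hgfne hgf
    obtain ⟨u, v, huv, huv_eq⟩ := Finset.card_eq_two.mp hcapgf
    have hu : u ∈ g ∩ f := by rw [huv_eq]; simp
    have hv : v ∈ g ∩ f := by rw [huv_eq]; simp
    have hug : u ∈ g := (Finset.mem_inter.mp hu).1
    have hvg : v ∈ g := (Finset.mem_inter.mp hv).1
    have huS : u = a ∨ u = b ∨ u = c ∨ u = d := by
      have := hf.2 (Finset.mem_inter.mp hu).2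
      simpa [hS] using this
    have hvS : v = a ∨ v = b ∨ v = c ∨ v = d := by
      have := hf.2 (Finset.mem_inter.mp hv).2
      simpa [hS] using this
    rcases huS with rfl | rfl | rfl | rfl <;> rcases hvS with rfl | rfl | rfl | rfl <;>
      first
        | exact huv rfl
        | exact Hab ⟨hug, hvg⟩
        | exact Hab ⟨hvg, hug⟩
        | exact Hac ⟨hug, hvg⟩
        | exact Hac ⟨hvg, hug⟩
        | exact Had ⟨hug, hvg⟩
        | exact Had ⟨hvg, hug⟩
        | exact Hbc ⟨hug, hvg⟩
        | exact Hbc ⟨hvg, hug⟩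
        | exact Hbd ⟨hug, hvg⟩
        | exact Hbd ⟨hvg, hug⟩
        | exact Hcd ⟨hug, hvg⟩
        | exact Hcd ⟨hvg, hug⟩
  obtain ⟨Hv, -⟩ := aux_closure E hconn hne' (fun f => f ∈ E ∧ f ⊆ S) hclosed
    e1 ⟨he1, he1S⟩ a ha1
  have hUS : (Finset.univ : Finset V) = S := by
    apply Finset.eq_of_subset_of_card_le _ (Finset.card_le_univ S)
    intro v _
    obtain ⟨f, hf, hvf⟩ := Hv v
    exact hf.2 hvf
  have hS4 : S.card = 4 := by
    rw [hS, Finset.card_insert_of_notMem (by simp [hab, Ne.symm hca, Ne.symm hda]),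
      Finset.card_insert_of_notMem (by simp [Ne.symm hcb, Ne.symm hdb]),
      Finset.card_insert_of_notMem (by simp [hcd]), Finset.card_singleton]
  have hV4 : Fintype.card V = 4 := by rw [← Finset.card_univ, hUS, hS4]
  refine ⟨hV4, ?_⟩
  apply Finset.eq_of_subset_of_card_le
  · intro e he
    rw [Finset.mem_powersetCard]
    exact ⟨Finset.subset_univ e, huniform e he⟩
  · rw [Finset.card_powersetCard, Finset.card_univ, hV4, hcard, hV4]
    norm_num
end

section
/- Let G = (V, E) be a 3-uniform hypergraph with at least one edge and no isolated vertices which is a 2-intersecting family, satisfies |E| = |V|, and has a system of distinct representatives. Then G is the 3-uniform cycle of length 4; that is, |V| = 4 and E consists of all four 3-element subsets of V. -/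
/-- Let `G = (V, E)` be a 3-uniform hypergraph with at least one edge and no isolated
vertices which is a 2-intersecting family (any two distinct edges intersect in exactly
two vertices), satisfies `|E| = |V|`, and has a system of distinct representatives.
Then `G` is the 3-uniform cycle of length 4: `|V| = 4` and `E` consists of all four
3-element subsets of `V`. -/
theorem stmt9 {V : Type*} [Fintype V] [DecidableEq V] (E : Finset (Finset V))
    (huniform : ∀ e ∈ E, e.card = 3)
    (hne : E.Nonempty)
    (hiso : ∀ v : V, ∃ e ∈ E, v ∈ e)
    (hcard : E.card = Fintype.card V)
    (hsdr : HasSDR E)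
    (hint : ∀ e ∈ E, ∀ e' ∈ E, e ≠ e' → (e ∩ e').card = 2) :
    Fintype.card V = 4 ∧ E = (Finset.univ : Finset V).powersetCard 3 := by
  classical
  obtain ⟨e₀, he₀⟩ := hne
  have hn3 : 3 ≤ Fintype.card V := by
    have h := Finset.card_le_card (Finset.subset_univ e₀)
    rw [huniform e₀ he₀, Finset.card_univ] at h
    exact h
  obtain ⟨A, hA, B, hB, hAB⟩ := Finset.one_lt_card.mp (by omega : 1 < E.card)
  set P := A ∩ B with hPdef
  have hPcard : P.card = 2 := hint A hA B hB hAB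
  have hPA : P ⊆ A := Finset.inter_subset_left
  have hPB : P ⊆ B := Finset.inter_subset_right
  -- For any two distinct edges both containing P, their intersection is exactly P
  have hkey : ∀ D ∈ E, ∀ D' ∈ E, D ≠ D' → P ⊆ D → P ⊆ D' → D ∩ D' = P := by
    intro D hD D' hD' hne hPD hPD'
    have h1 : P ⊆ D ∩ D' := Finset.subset_inter hPD hPD'
    have h2 : (D ∩ D').card = 2 := hint D hD D' hD' hne
    exact (Finset.eq_of_subset_of_card_le h1 (by omega)).symm
  by_cases hsun : ∀ D ∈ E, P ⊆ D
  · -- sunflower case: count contradiction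
    exfalso
    have hdisj : ∀ D ∈ E, ∀ D' ∈ E, D ≠ D' → Disjoint (D \ P) (D' \ P) := by
      intro D hD D' hD' hne
      rw [Finset.disjoint_left]
      intro v hv hv'
      have : v ∈ D ∩ D' := Finset.mem_inter.mpr ⟨(Finset.mem_sdiff.mp hv).1,
        (Finset.mem_sdiff.mp hv').1⟩
      rw [hkey D hD D' hD' hne (hsun D hD) (hsun D' hD')] at this
      exact (Finset.mem_sdiff.mp hv).2 this
    have hcount : (E.biUnion (· \ P)).card = E.card := by
      rw [Finset.card_biUnion hdisj]
      rw [Finset.sum_congr rfl (fun D hD => by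
        rw [Finset.card_sdiff_of_subset (hsun D hD), huniform D hD, hPcard])]
      simp
    have hsub : E.biUnion (· \ P) ⊆ Finset.univ \ P := by
      intro v hv
      obtain ⟨D, hD, hvD⟩ := Finset.mem_biUnion.mp hv
      exact Finset.mem_sdiff.mpr ⟨Finset.mem_univ v, (Finset.mem_sdiff.mp hvD).2⟩
    have := Finset.card_le_card hsub
    rw [hcount, Finset.card_sdiff_of_subset (Finset.subset_univ P), Finset.card_univ, hPcard] at this
    omega
  · push_neg at hsun
    obtain ⟨C, hC, hPC⟩ := hsun
    obtain ⟨x, y, hxy, hPxy⟩ := Finset.card_eq_two.mp hPcard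
    -- extract a, b
    have hAP : (A \ P).card = 1 := by
      rw [Finset.card_sdiff_of_subset hPA, huniform A hA, hPcard]
    have hBP : (B \ P).card = 1 := by
      rw [Finset.card_sdiff_of_subset hPB, huniform B hB, hPcard]
    obtain ⟨a, ha⟩ := Finset.card_eq_one.mp hAP
    obtain ⟨b, hb⟩ := Finset.card_eq_one.mp hBP
    have haA : a ∈ A := (Finset.mem_sdiff.mp (ha ▸ Finset.mem_singleton_self a)).1
    have haP : a ∉ P := (Finset.mem_sdiff.mp (ha ▸ Finset.mem_singleton_self a)).2
    have hbB : b ∈ B := (Finset.mem_sdiff.mp (hb ▸ Finset.mem_singleton_self b)).1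
    have hbP : b ∉ P := (Finset.mem_sdiff.mp (hb ▸ Finset.mem_singleton_self b)).2
    have hab : a ≠ b := by
      intro h
      subst h
      exact haP (Finset.mem_inter.mpr ⟨haA, hbB⟩)
    have hax : a ≠ x := fun h => haP (h ▸ hPxy ▸ Finset.mem_insert_self x {y})
    have hay : a ≠ y := fun h => haP (by rw [hPxy, h]; simp)
    have hbx : b ≠ x := fun h => hbP (h ▸ hPxy ▸ Finset.mem_insert_self x {y})
    have hby : b ≠ y := fun h => hbP (by rw [hPxy, h]; simp)
    have hAeq : A = {x, y, a} := by
      have h1 : A = P ∪ (A \ P) := (Finset.union_sdiff_of_subset hPA).symm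
      rw [h1, ha, hPxy]
      ext v
      simp only [Finset.mem_union, Finset.mem_insert, Finset.mem_singleton]
      tauto
    have hBeq : B = {x, y, b} := by
      have h1 : B = P ∪ (B \ P) := (Finset.union_sdiff_of_subset hPB).symm
      rw [h1, hb, hPxy]
      ext v
      simp only [Finset.mem_union, Finset.mem_insert, Finset.mem_singleton]
      tauto
    -- any edge not containing P equals {y,a,b} or {x,a,b}
    have hside : ∀ D ∈ E, ¬ P ⊆ D → D = {y, a, b} ∨ D = {x, a, b} := by
      intro D hD hPD
      have hxyD : x ∉ D ∨ y ∉ D := by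
        by_contra h
        push_neg at h
        apply hPD
        rw [hPxy]
        intro v hv
        simp only [Finset.mem_insert, Finset.mem_singleton] at hv
        rcases hv with h1 | h1
        · exact h1 ▸ h.1
        · exact h1 ▸ h.2
      have hDcard := huniform D hD
      rcases hxyD with hx | hy
      · -- x ∉ D : show D = {y, a, b}
        have hDA : D ≠ A := fun h => hx (h ▸ hAeq ▸ by simp)
        have hDB : D ≠ B := fun h => hx (h ▸ hBeq ▸ by simp)
        have h1 : D ∩ A ⊆ {y, a} := by
          intro v hv
          rw [Finset.mem_inter, hAeq] at hv
          simp at hv ⊢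
          rcases hv.2 with h | h | h
          · exact absurd (h ▸ hv.1) hx
          · tauto
          · tauto
        have h2 : D ∩ A = {y, a} := Finset.eq_of_subset_of_card_le h1 (by
          rw [hint D hD A hA hDA]
          exact Finset.card_le_two)
        have h3 : D ∩ B ⊆ {y, b} := by
          intro v hv
          rw [Finset.mem_inter, hBeq] at hv
          simp at hv ⊢
          rcases hv.2 with h | h | h
          · exact absurd (h ▸ hv.1) hx
          · tauto
          · tauto
        have h4 : D ∩ B = {y, b} := Finset.eq_of_subset_of_card_le h3 (by
          rw [hint D hD B hB hDB]
          exact Finset.card_le_two)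
        have hyD : y ∈ D := by
          have : y ∈ D ∩ A := h2 ▸ by simp
          exact (Finset.mem_inter.mp this).1
        have haD : a ∈ D := by
          have : a ∈ D ∩ A := h2 ▸ by simp
          exact (Finset.mem_inter.mp this).1
        have hbD : b ∈ D := by
          have : b ∈ D ∩ B := h4 ▸ by simp
          exact (Finset.mem_inter.mp this).1
        have hc3 : ({y, a, b} : Finset V).card = 3 := by
          rw [Finset.card_insert_of_notMem (by simp [Ne.symm hay, Ne.symm hby]),
            Finset.card_insert_of_notMem (by simp [hab]), Finset.card_singleton]
        left
        apply (Finset.eq_of_subset_of_card_le (fun v hv => by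
          simp only [Finset.mem_insert, Finset.mem_singleton] at hv
          rcases hv with h | h | h <;> subst h <;> assumption) _).symm
        rw [hDcard, hc3]
      · -- y ∉ D : show D = {x, a, b}
        have hDA : D ≠ A := fun h => hy (h ▸ hAeq ▸ by simp)
        have hDB : D ≠ B := fun h => hy (h ▸ hBeq ▸ by simp)
        have h1 : D ∩ A ⊆ {x, a} := by
          intro v hv
          rw [Finset.mem_inter, hAeq] at hv
          simp at hv ⊢
          rcases hv.2 with h | h | h
          · tauto
          · exact absurd (h ▸ hv.1) hy
          · tauto
        have h2 : D ∩ A = {x, a} := Finset.eq_of_subset_of_card_le h1 (by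
          rw [hint D hD A hA hDA]
          exact Finset.card_le_two)
        have h3 : D ∩ B ⊆ {x, b} := by
          intro v hv
          rw [Finset.mem_inter, hBeq] at hv
          simp at hv ⊢
          rcases hv.2 with h | h | h
          · tauto
          · exact absurd (h ▸ hv.1) hy
          · tauto
        have h4 : D ∩ B = {x, b} := Finset.eq_of_subset_of_card_le h3 (by
          rw [hint D hD B hB hDB]
          exact Finset.card_le_two)
        have hxD : x ∈ D := by
          have : x ∈ D ∩ A := h2 ▸ by simp
          exact (Finset.mem_inter.mp this).1
        have haD : a ∈ D := by
          have : a ∈ D ∩ A := h2 ▸ by simp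
          exact (Finset.mem_inter.mp this).1
        have hbD : b ∈ D := by
          have : b ∈ D ∩ B := h4 ▸ by simp
          exact (Finset.mem_inter.mp this).1
        have hc3 : ({x, a, b} : Finset V).card = 3 := by
          rw [Finset.card_insert_of_notMem (by simp [Ne.symm hax, Ne.symm hbx]),
            Finset.card_insert_of_notMem (by simp [hab]), Finset.card_singleton]
        right
        apply (Finset.eq_of_subset_of_card_le (fun v hv => by
          simp only [Finset.mem_insert, Finset.mem_singleton] at hv
          rcases hv with h | h | h <;> subst h <;> assumption) _).symm
        rw [hDcard, hc3]
    have hCside := hside C hC hPC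
    -- every edge is contained in S = {x, y, a, b}
    have hS : ∀ D ∈ E, D ⊆ {x, y, a, b} := by
      intro D hD
      by_cases hPD : P ⊆ D
      · -- D contains P; show D = A or D = B
        by_cases hDA : D = A
        · rw [hDA, hAeq]
          intro v hv
          simp only [Finset.mem_insert, Finset.mem_singleton] at hv ⊢
          rcases hv with h | h | h
          exacts [Or.inl h, Or.inr (Or.inl h), Or.inr (Or.inr (Or.inl h))]
        by_cases hDB : D = B
        · rw [hDB, hBeq]
          intro v hv
          simp only [Finset.mem_insert, Finset.mem_singleton] at hv ⊢
          rcases hv with h | h | h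
          exacts [Or.inl h, Or.inr (Or.inl h), Or.inr (Or.inr (Or.inr h))]
        · exfalso
          have haD : a ∉ D := by
            intro h
            have := hkey D hD A hA hDA hPD hPA
            have : a ∈ P := this ▸ Finset.mem_inter.mpr ⟨h, haA⟩
            exact haP this
          have hbD : b ∉ D := by
            intro h
            have := hkey D hD B hB hDB hPD hPB
            have : b ∈ P := this ▸ Finset.mem_inter.mpr ⟨h, hbB⟩
            exact hbP this
          have hDC : D ≠ C := fun h => hPC (h ▸ hPD)
          have hcard2 := hint D hD C hC hDC
          have hsmall : D ∩ C ⊆ {x} ∨ D ∩ C ⊆ {y} := by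
            rcases hCside with hCeq | hCeq
            · right
              intro v hv
              rw [Finset.mem_inter, hCeq] at hv
              obtain ⟨hvD, hvC⟩ := hv
              simp only [Finset.mem_insert, Finset.mem_singleton] at hvC ⊢
              rcases hvC with h | h | h
              · exact h
              · exact absurd (h ▸ hvD) haD
              · exact absurd (h ▸ hvD) hbD
            · left
              intro v hv
              rw [Finset.mem_inter, hCeq] at hv
              obtain ⟨hvD, hvC⟩ := hv
              simp only [Finset.mem_insert, Finset.mem_singleton] at hvC ⊢
              rcases hvC with h | h | h
              · exact h
              · exact absurd (h ▸ hvD) haD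
              · exact absurd (h ▸ hvD) hbD
          rcases hsmall with h | h <;>
          · have := Finset.card_le_card h
            rw [hcard2, Finset.card_singleton] at this
            omega
      · rcases hside D hD hPD with hDeq | hDeq
        · rw [hDeq]
          intro v hv
          simp only [Finset.mem_insert, Finset.mem_singleton] at hv ⊢
          rcases hv with h | h | h
          exacts [Or.inr (Or.inl h), Or.inr (Or.inr (Or.inl h)), Or.inr (Or.inr (Or.inr h))]
        · rw [hDeq]
          intro v hv
          simp only [Finset.mem_insert, Finset.mem_singleton] at hv ⊢
          rcases hv with h | h | h
          exacts [Or.inl h, Or.inr (Or.inr (Or.inl h)), Or.inr (Or.inr (Or.inr h))]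
    -- hence univ ⊆ S, so card V ≤ 4
    have huniv : (Finset.univ : Finset V) ⊆ {x, y, a, b} := by
      intro v _
      obtain ⟨e, he, hve⟩ := hiso v
      exact hS e he hve
    have hc4 : ({x, y, a, b} : Finset V).card = 4 := by
      rw [Finset.card_insert_of_notMem (by simp [hxy, Ne.symm hax, Ne.symm hbx]),
        Finset.card_insert_of_notMem (by simp [Ne.symm hay, Ne.symm hby]),
        Finset.card_insert_of_notMem (by simp [hab]), Finset.card_singleton]
    have hn4 : Fintype.card V ≤ 4 := by
      calc Fintype.card V = (Finset.univ : Finset V).card := (Finset.card_univ).symm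
        _ ≤ ({x, y, a, b} : Finset V).card := Finset.card_le_card huniv
        _ ≤ 4 := by rw [hc4]
    -- E ⊆ powersetCard 3 univ
    have hEsub : E ⊆ (Finset.univ : Finset V).powersetCard 3 := by
      intro e he
      exact Finset.mem_powersetCard.mpr ⟨Finset.subset_univ e, huniform e he⟩
    have hPcount : ((Finset.univ : Finset V).powersetCard 3).card =
        (Fintype.card V).choose 3 := by
      rw [Finset.card_powersetCard, Finset.card_univ]
    have hle := Finset.card_le_card hEsub
    rw [hPcount, hcard] at hle
    have hveq : Fintype.card V = 4 := by
      rcases (by omega : Fintype.card V = 3 ∨ Fintype.card V = 4) with h | h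
      · rw [h] at hle
        norm_num [Nat.choose] at hle
      · exact h
    refine ⟨hveq, Finset.eq_of_subset_of_card_le hEsub ?_⟩
    rw [hPcount, hcard, hveq]
    decide
end

section
/- Let G = (V, E) be a 3-uniform hypergraph with at least one edge and no isolated vertices which is a 1-intersecting family, satisfies |E| = |V|, and has a system of distinct representatives. Then G is isomorphic to the Fano hypergraph. -/
/-- The edge set of the Fano hypergraph, on the vertex set `Fin 7`
(vertex `v_i` of the paper corresponds to `i - 1 : Fin 7`). -/
def fanoEdges : Finset (Finset (Fin 7)) :=
  {({0, 1, 2} : Finset (Fin 7)), {0, 3, 4}, {0, 5, 6}, {1, 3, 5}, {1, 4, 6},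
    {2, 3, 6}, {2, 4, 5}}

/-- Let `G = (V, E)` be a 3-uniform hypergraph with at least one edge and no isolated
vertices which is a 1-intersecting family (any two distinct edges intersect in exactly
one vertex), satisfies `|E| = |V|`, and has a system of distinct representatives.
Then `G` is isomorphic to the Fano hypergraph. -/
theorem stmt10 {V : Type*} [Fintype V] [DecidableEq V] (E : Finset (Finset V))
    (huniform : ∀ e ∈ E, e.card = 3)
    (hne : E.Nonempty)
    (hiso : ∀ v : V, ∃ e ∈ E, v ∈ e)
    (hcard : E.card = Fintype.card V)
    (hsdr : HasSDR E)
    (hint : ∀ e ∈ E, ∀ e' ∈ E, e ≠ e' → (e ∩ e').card = 1) :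
    ∃ φ : V ≃ Fin 7, E.image (fun e => e.image φ) = fanoEdges := by
  classical
  -- two distinct edges sharing a vertex intersect exactly in that vertex
  have hsing : ∀ e ∈ E, ∀ e' ∈ E, e ≠ e' → ∀ v, v ∈ e → v ∈ e' → e ∩ e' = {v} := by
    intro e he e' he' hnee v hv hv'
    obtain ⟨a, ha⟩ := Finset.card_eq_one.mp (hint e he e' he' hnee)
    have hv2 : v ∈ e ∩ e' := Finset.mem_inter.mpr ⟨hv, hv'⟩
    rw [ha] at hv2 ⊢
    simp only [Finset.mem_singleton] at hv2
    subst hv2; rfl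
  -- two edges sharing two distinct vertices are equal
  have hunique2 : ∀ e ∈ E, ∀ e' ∈ E, ∀ u v : V, u ≠ v → u ∈ e → v ∈ e → u ∈ e' → v ∈ e' →
      e = e' := by
    intro e he e' he' u v huv hue hve hue' hve'
    by_contra hne'
    have hs := hsing e he e' he' hne' u hue hue'
    have hv2 : v ∈ e ∩ e' := Finset.mem_inter.mpr ⟨hve, hve'⟩
    rw [hs] at hv2
    exact huv (Finset.mem_singleton.mp hv2).symm
  -- if two distinct edges share u, any common vertex is u
  have hmem_unique : ∀ u : V, ∀ e ∈ E, ∀ e' ∈ E, u ∈ e → u ∈ e' → e ≠ e' →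
      ∀ w, w ∈ e → w ∈ e' → w = u := by
    intro u e he e' he' hu hu' hnee w hw hw'
    have hs := hsing e he e' he' hnee u hu hu'
    have : w ∈ e ∩ e' := Finset.mem_inter.mpr ⟨hw, hw'⟩
    rw [hs] at this
    exact Finset.mem_singleton.mp this
  -- every degree is at most 3
  have hdeg_le : ∀ v : V, (E.filter (fun e => v ∈ e)).card ≤ 3 := by
    intro v
    by_contra hlt
    push_neg at hlt
    -- every edge contains v
    have hall : ∀ f ∈ E, v ∈ f := by
      intro f hf
      by_contra hvf
      have hchoice : ∀ e ∈ E.filter (fun e => v ∈ e),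
          (if h : (e ∩ f).Nonempty then h.choose else v) ∈ e ∩ f := by
        intro e hef
        simp only [Finset.mem_filter] at hef
        have hnef : e ≠ f := fun h => hvf (h ▸ hef.2)
        have h1 : (e ∩ f).card = 1 := hint e hef.1 f hf hnef
        have hne2 : (e ∩ f).Nonempty := Finset.card_pos.mp (by omega)
        simp only [dif_pos hne2]
        exact hne2.choose_spec
      have hle : (E.filter (fun e => v ∈ e)).card ≤ f.card := by
        apply Finset.card_le_card_of_injOn
          (fun e => if h : (e ∩ f).Nonempty then h.choose else v)
        · intro e hef
          exact (Finset.mem_inter.mp (hchoice e hef)).2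
        · intro e hee e' hee' heq
          simp only [Finset.mem_coe] at hee hee'
          by_contra hne'
          have h1 := hchoice e hee
          have h2 := hchoice e' hee'
          have heq' : (if h : (e ∩ f).Nonempty then h.choose else v)
              = (if h : (e' ∩ f).Nonempty then h.choose else v) := heq
          rw [← heq'] at h2
          simp only [Finset.mem_filter] at hee hee'
          have hx : (if h : (e ∩ f).Nonempty then h.choose else v) ∈ e ∩ e' :=
            Finset.mem_inter.mpr ⟨(Finset.mem_inter.mp h1).1, (Finset.mem_inter.mp h2).1⟩
          rw [hsing e hee.1 e' hee'.1 hne' v hee.2 hee'.2] at hx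
          have hvff : (if h : (e ∩ f).Nonempty then h.choose else v) ∈ f :=
            (Finset.mem_inter.mp h1).2
          rw [Finset.mem_singleton.mp hx] at hvff
          exact hvf hvff
      rw [huniform f hf] at hle
      omega
    -- then |V| = 2|E| + 1, contradiction
    have hdisj : ∀ e ∈ E, ∀ e' ∈ E, e ≠ e' → Disjoint (e.erase v) (e'.erase v) := by
      intro e he e' he' hnee
      rw [Finset.disjoint_left]
      intro x hx hx'
      have hxe := Finset.mem_of_mem_erase hx
      have hxe' := Finset.mem_of_mem_erase hx'
      have := hmem_unique v e he e' he' (hall e he) (hall e' he') hnee x hxe hxe'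
      exact (Finset.mem_erase.mp hx).1 this
    have hbi : E.biUnion (fun e => e.erase v) = Finset.univ.erase v := by
      ext u
      constructor
      · intro h
        obtain ⟨e, _, hu⟩ := Finset.mem_biUnion.mp h
        exact Finset.mem_erase.mpr ⟨(Finset.mem_erase.mp hu).1, Finset.mem_univ u⟩
      · intro h
        obtain ⟨e, he, hue⟩ := hiso u
        exact Finset.mem_biUnion.mpr
          ⟨e, he, Finset.mem_erase.mpr ⟨(Finset.mem_erase.mp h).1, hue⟩⟩
    have hcb : (E.biUnion (fun e => e.erase v)).card = ∑ e ∈ E, (e.erase v).card :=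
      Finset.card_biUnion hdisj
    have hec : ∀ e ∈ E, (e.erase v).card = 2 := by
      intro e he
      rw [Finset.card_erase_of_mem (hall e he), huniform e he]
    rw [Finset.sum_congr rfl hec, Finset.sum_const, smul_eq_mul] at hcb
    rw [hbi, Finset.card_erase_of_mem (Finset.mem_univ v), Finset.card_univ] at hcb
    have h1 : 1 ≤ E.card := Finset.card_pos.mpr hne
    have h2 : 1 ≤ Fintype.card V := Fintype.card_pos_iff.mpr ⟨v⟩
    omega
  -- sum of degrees is 3|E|
  have hsum : ∑ v : V, (E.filter (fun e => v ∈ e)).card = 3 * E.card := by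
    have h1 : ∀ v : V, (E.filter (fun e => v ∈ e)).card
        = ∑ e ∈ E, if v ∈ e then 1 else 0 := fun v => Finset.card_filter _ _
    simp_rw [h1]
    rw [Finset.sum_comm]
    have h2 : ∀ e ∈ E, (∑ v : V, if v ∈ e then 1 else 0) = 3 := by
      intro e he
      rw [Finset.sum_ite_mem, Finset.univ_inter, Finset.sum_const, smul_eq_mul, mul_one]
      exact huniform e he
    rw [Finset.sum_congr rfl h2, Finset.sum_const, smul_eq_mul, mul_comm]
  -- every degree is exactly 3
  have hdeg_eq : ∀ v : V, (E.filter (fun e => v ∈ e)).card = 3 := by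
    by_contra h
    push_neg at h
    obtain ⟨v0, hv0⟩ := h
    have hlt : (E.filter (fun e => v0 ∈ e)).card < 3 := lt_of_le_of_ne (hdeg_le v0) hv0
    have hstrict : ∑ v : V, (E.filter (fun e => v ∈ e)).card < ∑ _v : V, 3 :=
      Finset.sum_lt_sum (fun i _ => hdeg_le i) ⟨v0, Finset.mem_univ v0, hlt⟩
    rw [hsum, Finset.sum_const, Finset.card_univ, smul_eq_mul] at hstrict
    omega
  -- |E| = 7
  obtain ⟨e0, he0⟩ := hne
  have hm7 : E.card = 7 := by
    have hpart : E.erase e0 = e0.biUnion (fun v => (E.erase e0).filter (fun e => v ∈ e)) := by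
      ext e
      simp only [Finset.mem_biUnion, Finset.mem_filter]
      constructor
      · intro hee
        have hee' : e ∈ E := Finset.mem_of_mem_erase hee
        have hnee : e ≠ e0 := Finset.ne_of_mem_erase hee
        obtain ⟨w, hw⟩ := Finset.card_eq_one.mp (hint e hee' e0 he0 hnee)
        have hw2 : w ∈ e ∩ e0 := by rw [hw]; exact Finset.mem_singleton_self w
        exact ⟨w, (Finset.mem_inter.mp hw2).2, hee, (Finset.mem_inter.mp hw2).1⟩
      · rintro ⟨w, _, hee, _⟩; exact hee
    have hcb : (e0.biUnion (fun v => (E.erase e0).filter (fun e => v ∈ e))).card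
        = ∑ v ∈ e0, ((E.erase e0).filter (fun e => v ∈ e)).card := by
      apply Finset.card_biUnion
      intro x hx y hy hxy
      rw [Function.onFun, Finset.disjoint_left]
      intro e hex hey
      simp only [Finset.mem_filter, Finset.mem_erase] at hex hey
      have hx' := hmem_unique x e hex.1.2 e0 he0 hex.2 hx hex.1.1
      exact hxy ((hx' y hey.2 hy).symm ▸ rfl)
    have hfc : ∀ v ∈ e0, ((E.erase e0).filter (fun e => v ∈ e)).card = 2 := by
      intro v hv
      have heq : (E.erase e0).filter (fun e => v ∈ e)
          = (E.filter (fun e => v ∈ e)).erase e0 := by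
        ext e
        simp only [Finset.mem_filter, Finset.mem_erase]
        tauto
      rw [heq, Finset.card_erase_of_mem (Finset.mem_filter.mpr ⟨he0, hv⟩), hdeg_eq v]
    have h6 : (E.erase e0).card = 6 := by
      rw [hpart, hcb, Finset.sum_congr rfl hfc, Finset.sum_const, smul_eq_mul,
        huniform e0 he0]
    have := Finset.card_erase_of_mem he0
    have h1 : 1 ≤ E.card := Finset.card_pos.mpr ⟨e0, he0⟩
    omega
  have hn7 : Fintype.card V = 7 := by rw [← hcard, hm7]
  -- any two distinct vertices lie on a common edge
  have hpair : ∀ u w : V, u ≠ w → ∃ e ∈ E, u ∈ e ∧ w ∈ e := by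
    intro u w huw
    have hFcard : (E.filter (fun e => u ∈ e)).card = 3 := hdeg_eq u
    have hdisj : ∀ e ∈ E.filter (fun e => u ∈ e), ∀ e' ∈ E.filter (fun e => u ∈ e),
        e ≠ e' → Disjoint (e.erase u) (e'.erase u) := by
      intro e he e' he' hnee
      simp only [Finset.mem_filter] at he he'
      rw [Finset.disjoint_left]
      intro x hx hx'
      have := hmem_unique u e he.1 e' he'.1 he.2 he'.2 hnee x
        (Finset.mem_of_mem_erase hx) (Finset.mem_of_mem_erase hx')
      exact (Finset.mem_erase.mp hx).1 this
    have hS : ((E.filter (fun e => u ∈ e)).biUnion (fun e => e.erase u)).card = 6 := by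
      rw [Finset.card_biUnion hdisj]
      have hec : ∀ e ∈ E.filter (fun e => u ∈ e), (e.erase u).card = 2 := by
        intro e he
        simp only [Finset.mem_filter] at he
        rw [Finset.card_erase_of_mem he.2, huniform e he.1]
      rw [Finset.sum_congr rfl hec, Finset.sum_const, smul_eq_mul, hFcard]
    have hunotin : u ∉ (E.filter (fun e => u ∈ e)).biUnion (fun e => e.erase u) := by
      simp
    have huniv : insert u ((E.filter (fun e => u ∈ e)).biUnion (fun e => e.erase u))
        = Finset.univ := by
      apply Finset.eq_univ_of_card
      rw [Finset.card_insert_of_notMem hunotin, hS, hn7]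
    have hw : w ∈ insert u ((E.filter (fun e => u ∈ e)).biUnion (fun e => e.erase u)) := by
      rw [huniv]; exact Finset.mem_univ w
    rcases Finset.mem_insert.mp hw with h | h
    · exact absurd h.symm huw
    · obtain ⟨e, heF, hwe⟩ := Finset.mem_biUnion.mp h
      have hmf := Finset.mem_filter.mp heF
      exact ⟨e, hmf.1, hmf.2, Finset.mem_of_mem_erase hwe⟩
  -- extract third vertex of an edge containing two given vertices
  have hthird : ∀ e ∈ E, ∀ u v : V, u ≠ v → u ∈ e → v ∈ e →
      ∃ w, w ≠ u ∧ w ≠ v ∧ w ∈ e ∧ e = {u, v, w} := by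
    intro e he u v huv hu hv
    have hss : ({u, v} : Finset V) ⊆ e := by
      intro x hx
      rcases Finset.mem_insert.mp hx with rfl | hx
      · exact hu
      · rw [Finset.mem_singleton.mp hx]; exact hv
    have hc : (e \ {u, v}).card = 1 := by
      rw [Finset.card_sdiff_of_subset hss, huniform e he, Finset.card_pair huv]
    obtain ⟨w, hw⟩ := Finset.card_eq_one.mp hc
    have hwmem : w ∈ e \ {u, v} := by rw [hw]; exact Finset.mem_singleton_self w
    rw [Finset.mem_sdiff, Finset.mem_insert, Finset.mem_singleton] at hwmem
    push_neg at hwmem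
    refine ⟨w, hwmem.2.1, hwmem.2.2, hwmem.1, ?_⟩
    refine (Finset.eq_of_subset_of_card_le ?_ ?_).symm
    · intro x hx
      rcases Finset.mem_insert.mp hx with rfl | hx
      · exact hu
      rcases Finset.mem_insert.mp hx with rfl | hx
      · exact hv
      · rw [Finset.mem_singleton.mp hx]; exact hwmem.1
    · rw [huniform e he]
      have : ({u, v, w} : Finset V).card = 3 :=
        Finset.card_eq_three.mpr ⟨u, v, w, huv, Ne.symm hwmem.2.1, Ne.symm hwmem.2.2, rfl⟩
      omega
  -- name the vertices of the Fano plane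
  obtain ⟨a0, a1, a2, h01, h02, h12, he0eq⟩ := Finset.card_eq_three.mp (huniform e0 he0)
  have ha0e0 : a0 ∈ e0 := by rw [he0eq]; simp
  have ha1e0 : a1 ∈ e0 := by rw [he0eq]; simp
  have ha2e0 : a2 ∈ e0 := by rw [he0eq]; simp
  have he0F0 : e0 ∈ E.filter (fun e => a0 ∈ e) := Finset.mem_filter.mpr ⟨he0, ha0e0⟩
  have h2c : ((E.filter (fun e => a0 ∈ e)).erase e0).card = 2 := by
    rw [Finset.card_erase_of_mem he0F0, hdeg_eq a0]
  obtain ⟨e2, e3, he23ne, h23eq⟩ := Finset.card_eq_two.mp h2c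
  have he2m : e2 ∈ (E.filter (fun e => a0 ∈ e)).erase e0 := by rw [h23eq]; simp
  have he3m : e3 ∈ (E.filter (fun e => a0 ∈ e)).erase e0 := by rw [h23eq]; simp
  have he2E : e2 ∈ E := (Finset.mem_filter.mp (Finset.mem_of_mem_erase he2m)).1
  have ha0e2 : a0 ∈ e2 := (Finset.mem_filter.mp (Finset.mem_of_mem_erase he2m)).2
  have he2ne0 : e2 ≠ e0 := Finset.ne_of_mem_erase he2m
  have he3E : e3 ∈ E := (Finset.mem_filter.mp (Finset.mem_of_mem_erase he3m)).1
  have ha0e3 : a0 ∈ e3 := (Finset.mem_filter.mp (Finset.mem_of_mem_erase he3m)).2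
  have he3ne0 : e3 ≠ e0 := Finset.ne_of_mem_erase he3m
  have he3ne2 : e3 ≠ e2 := Ne.symm he23ne
  -- the edges through a0 are exactly e0, e2, e3
  have ha0only : ∀ f ∈ E, a0 ∈ f → f = e0 ∨ f = e2 ∨ f = e3 := by
    intro f hf ha
    have hm : f ∈ E.filter (fun e => a0 ∈ e) := Finset.mem_filter.mpr ⟨hf, ha⟩
    rw [← Finset.insert_erase he0F0, h23eq] at hm
    simpa using hm
  -- second and third vertices of e2
  have h2e : (e2.erase a0).card = 2 := by
    rw [Finset.card_erase_of_mem ha0e2, huniform e2 he2E]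
  obtain ⟨a3, a4, h34, h34eq⟩ := Finset.card_eq_two.mp h2e
  have ha3m : a3 ∈ e2.erase a0 := by rw [h34eq]; simp
  have ha4m : a4 ∈ e2.erase a0 := by rw [h34eq]; simp
  have ha3e2 : a3 ∈ e2 := Finset.mem_of_mem_erase ha3m
  have ha4e2 : a4 ∈ e2 := Finset.mem_of_mem_erase ha4m
  have h30 : a3 ≠ a0 := (Finset.mem_erase.mp ha3m).1
  have h40 : a4 ≠ a0 := (Finset.mem_erase.mp ha4m).1
  have he2eq : e2 = {a0, a3, a4} := by rw [← Finset.insert_erase ha0e2, h34eq]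
  have ha3ne0 : a3 ∉ e0 := fun h =>
    h30 (hmem_unique a0 e2 he2E e0 he0 ha0e2 ha0e0 he2ne0 a3 ha3e2 h)
  have ha4ne0 : a4 ∉ e0 := fun h =>
    h40 (hmem_unique a0 e2 he2E e0 he0 ha0e2 ha0e0 he2ne0 a4 ha4e2 h)
  have ha1ne2 : a1 ∉ e2 := fun h =>
    h01 (hmem_unique a0 e0 he0 e2 he2E ha0e0 ha0e2 (Ne.symm he2ne0) a1 ha1e0 h).symm
  have ha2ne2 : a2 ∉ e2 := fun h =>
    h02 (hmem_unique a0 e0 he0 e2 he2E ha0e0 ha0e2 (Ne.symm he2ne0) a2 ha2e0 h).symm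
  have ha1ne3 : a1 ∉ e3 := fun h =>
    h01 (hmem_unique a0 e0 he0 e3 he3E ha0e0 ha0e3 (Ne.symm he3ne0) a1 ha1e0 h).symm
  have ha2ne3 : a2 ∉ e3 := fun h =>
    h02 (hmem_unique a0 e0 he0 e3 he3E ha0e0 ha0e3 (Ne.symm he3ne0) a2 ha2e0 h).symm
  -- the edge e4 through a1 and a3
  have h13 : a1 ≠ a3 := fun h => ha3ne0 (by rw [← h]; exact ha1e0)
  obtain ⟨e4, he4E, ha1e4, ha3e4⟩ := hpair a1 a3 h13
  obtain ⟨a5, h51, h53, ha5e4, he4eq⟩ := hthird e4 he4E a1 a3 h13 ha1e4 ha3e4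
  have ha0ne4 : a0 ∉ e4 := by
    intro h
    have he := hunique2 e4 he4E e0 he0 a0 a1 h01 h ha1e4 ha0e0 ha1e0
    rw [he] at ha3e4
    exact ha3ne0 ha3e4
  have ha2ne4 : a2 ∉ e4 := by
    intro h
    have he := hunique2 e4 he4E e0 he0 a1 a2 h12 ha1e4 h ha1e0 ha2e0
    rw [he] at ha3e4
    exact ha3ne0 ha3e4
  have ha4ne4 : a4 ∉ e4 := by
    intro h
    have he := hunique2 e4 he4E e2 he2E a3 a4 h34 ha3e4 h ha3e2 ha4e2
    rw [he] at ha1e4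
    exact ha1ne2 ha1e4
  have h50 : a5 ≠ a0 := fun h => ha0ne4 (by rw [← h]; exact ha5e4)
  -- a5 lies on e3
  have ha5e3 : a5 ∈ e3 := by
    obtain ⟨f, hfE, ha0f, ha5f⟩ := hpair a0 a5 (Ne.symm h50)
    rcases ha0only f hfE ha0f with rfl | rfl | rfl
    · exfalso
      rw [he0eq] at ha5f
      simp only [Finset.mem_insert, Finset.mem_singleton] at ha5f
      rcases ha5f with h | h | h
      · exact h50 h
      · exact h51 h
      · exact ha2ne4 (by rw [← h]; exact ha5e4)
    · exfalso
      rw [he2eq] at ha5f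
      simp only [Finset.mem_insert, Finset.mem_singleton] at ha5f
      rcases ha5f with h | h | h
      · exact h50 h
      · exact h53 h
      · exact ha4ne4 (by rw [← h]; exact ha5e4)
    · exact ha5f
  obtain ⟨a6, h60, h65, ha6e3, he3eq⟩ := hthird e3 he3E a0 a5 (Ne.symm h50) ha0e3 ha5e3
  have ha6ne0 : a6 ∉ e0 := fun h =>
    h60 (hmem_unique a0 e3 he3E e0 he0 ha0e3 ha0e0 he3ne0 a6 ha6e3 h)
  have ha6ne2 : a6 ∉ e2 := fun h =>
    h60 (hmem_unique a0 e3 he3E e2 he2E ha0e3 ha0e2 he3ne2 a6 ha6e3 h)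
  -- all 21 disequalities
  have h03 : a0 ≠ a3 := Ne.symm h30
  have h04 : a0 ≠ a4 := Ne.symm h40
  have h05 : a0 ≠ a5 := Ne.symm h50
  have h06 : a0 ≠ a6 := Ne.symm h60
  have h14 : a1 ≠ a4 := fun h => ha4ne0 (by rw [← h]; exact ha1e0)
  have h15 : a1 ≠ a5 := Ne.symm h51
  have h16 : a1 ≠ a6 := fun h => ha6ne0 (by rw [← h]; exact ha1e0)
  have h23 : a2 ≠ a3 := fun h => ha3ne0 (by rw [← h]; exact ha2e0)
  have h24 : a2 ≠ a4 := fun h => ha4ne0 (by rw [← h]; exact ha2e0)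
  have h25 : a2 ≠ a5 := fun h => ha2ne4 (by rw [h]; exact ha5e4)
  have h26 : a2 ≠ a6 := fun h => ha6ne0 (by rw [← h]; exact ha2e0)
  have h35 : a3 ≠ a5 := Ne.symm h53
  have h36 : a3 ≠ a6 := fun h => ha6ne2 (by rw [← h]; exact ha3e2)
  have h45 : a4 ≠ a5 := fun h => ha4ne4 (by rw [h]; exact ha5e4)
  have h46 : a4 ≠ a6 := fun h => ha6ne2 (by rw [← h]; exact ha4e2)
  have h56 : a5 ≠ a6 := Ne.symm h65
  -- the seven vertices are all vertices
  have hsetcard : ({a0, a1, a2, a3, a4, a5, a6} : Finset V).card = 7 := by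
    rw [Finset.card_insert_of_notMem (by simp [h01, h02, h03, h04, h05, h06]),
      Finset.card_insert_of_notMem (by simp [h12, h13, h14, h15, h16]),
      Finset.card_insert_of_notMem (by simp [h23, h24, h25, h26]),
      Finset.card_insert_of_notMem (by simp [h34, h35, h36]),
      Finset.card_insert_of_notMem (by simp [h45, h46]),
      Finset.card_pair h56]
  have hUmem : ∀ x : V, x ∈ ({a0, a1, a2, a3, a4, a5, a6} : Finset V) := by
    have hU : ({a0, a1, a2, a3, a4, a5, a6} : Finset V) = Finset.univ :=
      Finset.eq_univ_of_card _ (by rw [hsetcard, hn7])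
    intro x
    rw [hU]
    exact Finset.mem_univ x
  -- the edge e5 through a1 and a4
  obtain ⟨e5, he5E, ha1e5, ha4e5⟩ := hpair a1 a4 h14
  obtain ⟨x, hx1, hx4, hxe5, he5eq⟩ := hthird e5 he5E a1 a4 h14 ha1e5 ha4e5
  have hx6 : x = a6 := by
    have hx := hUmem x
    simp only [Finset.mem_insert, Finset.mem_singleton] at hx
    rcases hx with rfl | rfl | rfl | rfl | rfl | rfl | rfl
    · exfalso
      have he := hunique2 e5 he5E e0 he0 x a1 h01 hxe5 ha1e5 ha0e0 ha1e0
      rw [he] at ha4e5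
      exact ha4ne0 ha4e5
    · exact absurd rfl hx1
    · exfalso
      have he := hunique2 e5 he5E e0 he0 a1 x h12 ha1e5 hxe5 ha1e0 ha2e0
      rw [he] at ha4e5
      exact ha4ne0 ha4e5
    · exfalso
      have he := hunique2 e5 he5E e2 he2E x a4 h34 hxe5 ha4e5 ha3e2 ha4e2
      rw [he] at ha1e5
      exact ha1ne2 ha1e5
    · exact absurd rfl hx4
    · exfalso
      have he := hunique2 e5 he5E e4 he4E a1 x h15 ha1e5 hxe5 ha1e4 ha5e4
      rw [he] at ha4e5
      exact ha4ne4 ha4e5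
    · rfl
  rw [hx6] at he5eq hxe5
  have ha6e5 : a6 ∈ e5 := hxe5
  have ha2ne5 : a2 ∉ e5 := by
    intro h
    have he := hunique2 e5 he5E e0 he0 a1 a2 h12 ha1e5 h ha1e0 ha2e0
    rw [he] at ha4e5
    exact ha4ne0 ha4e5
  -- the edge e6 through a2 and a3
  obtain ⟨e6, he6E, ha2e6, ha3e6⟩ := hpair a2 a3 h23
  obtain ⟨y, hy2, hy3, hye6, he6eq⟩ := hthird e6 he6E a2 a3 h23 ha2e6 ha3e6
  have hy6 : y = a6 := by
    have hy := hUmem y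
    simp only [Finset.mem_insert, Finset.mem_singleton] at hy
    rcases hy with rfl | rfl | rfl | rfl | rfl | rfl | rfl
    · exfalso
      have he := hunique2 e6 he6E e0 he0 y a2 h02 hye6 ha2e6 ha0e0 ha2e0
      rw [he] at ha3e6
      exact ha3ne0 ha3e6
    · exfalso
      have he := hunique2 e6 he6E e0 he0 y a2 h12 hye6 ha2e6 ha1e0 ha2e0
      rw [he] at ha3e6
      exact ha3ne0 ha3e6
    · exact absurd rfl hy2
    · exact absurd rfl hy3
    · exfalso
      have he := hunique2 e6 he6E e2 he2E a3 y h34 ha3e6 hye6 ha3e2 ha4e2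
      rw [he] at ha2e6
      exact ha2ne2 ha2e6
    · exfalso
      have he := hunique2 e6 he6E e4 he4E a3 y h35 ha3e6 hye6 ha3e4 ha5e4
      rw [he] at ha2e6
      exact ha2ne4 ha2e6
    · rfl
  rw [hy6] at he6eq
  -- the edge e7 through a2 and a4
  obtain ⟨e7, he7E, ha2e7, ha4e7⟩ := hpair a2 a4 h24
  obtain ⟨z, hz2, hz4, hze7, he7eq⟩ := hthird e7 he7E a2 a4 h24 ha2e7 ha4e7
  have hz5 : z = a5 := by
    have hz := hUmem z
    simp only [Finset.mem_insert, Finset.mem_singleton] at hz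
    rcases hz with rfl | rfl | rfl | rfl | rfl | rfl | rfl
    · exfalso
      have he := hunique2 e7 he7E e0 he0 z a2 h02 hze7 ha2e7 ha0e0 ha2e0
      rw [he] at ha4e7
      exact ha4ne0 ha4e7
    · exfalso
      have he := hunique2 e7 he7E e0 he0 z a2 h12 hze7 ha2e7 ha1e0 ha2e0
      rw [he] at ha4e7
      exact ha4ne0 ha4e7
    · exact absurd rfl hz2
    · exfalso
      have he := hunique2 e7 he7E e2 he2E z a4 h34 hze7 ha4e7 ha3e2 ha4e2
      rw [he] at ha2e7
      exact ha2ne2 ha2e7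
    · exact absurd rfl hz4
    · rfl
    · exfalso
      have he := hunique2 e7 he7E e5 he5E a4 z h46 ha4e7 hze7 ha4e5 ha6e5
      rw [he] at ha2e7
      exact ha2ne5 ha2e7
  rw [hz5] at he7eq
  -- the labeling
  have hainj : Function.Injective (![a0, a1, a2, a3, a4, a5, a6] : Fin 7 → V) := by
    intro i j h
    fin_cases i <;> fin_cases j <;>
      first
        | rfl
        | exact absurd h h01 | exact absurd h (Ne.symm h01)
        | exact absurd h h02 | exact absurd h (Ne.symm h02)
        | exact absurd h h03 | exact absurd h (Ne.symm h03)
        | exact absurd h h04 | exact absurd h (Ne.symm h04)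
        | exact absurd h h05 | exact absurd h (Ne.symm h05)
        | exact absurd h h06 | exact absurd h (Ne.symm h06)
        | exact absurd h h12 | exact absurd h (Ne.symm h12)
        | exact absurd h h13 | exact absurd h (Ne.symm h13)
        | exact absurd h h14 | exact absurd h (Ne.symm h14)
        | exact absurd h h15 | exact absurd h (Ne.symm h15)
        | exact absurd h h16 | exact absurd h (Ne.symm h16)
        | exact absurd h h23 | exact absurd h (Ne.symm h23)
        | exact absurd h h24 | exact absurd h (Ne.symm h24)
        | exact absurd h h25 | exact absurd h (Ne.symm h25)
        | exact absurd h h26 | exact absurd h (Ne.symm h26)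
        | exact absurd h h34 | exact absurd h (Ne.symm h34)
        | exact absurd h h35 | exact absurd h (Ne.symm h35)
        | exact absurd h h36 | exact absurd h (Ne.symm h36)
        | exact absurd h h45 | exact absurd h (Ne.symm h45)
        | exact absurd h h46 | exact absurd h (Ne.symm h46)
        | exact absurd h h56 | exact absurd h (Ne.symm h56)
  have hbij : Function.Bijective (![a0, a1, a2, a3, a4, a5, a6] : Fin 7 → V) :=
    (Fintype.bijective_iff_injective_and_card _).mpr
      ⟨hainj, by rw [Fintype.card_fin, hn7]⟩
  have hEimg : fanoEdges.image (Finset.image (![a0, a1, a2, a3, a4, a5, a6] : Fin 7 → V))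
      = E := by
    apply Finset.eq_of_subset_of_card_le
    · intro s hs
      simp only [fanoEdges, Finset.mem_image, Finset.mem_insert, Finset.mem_singleton] at hs
      obtain ⟨T, hT, rfl⟩ := hs
      rcases hT with rfl | rfl | rfl | rfl | rfl | rfl | rfl <;>
        simp only [Finset.image_insert, Finset.image_singleton]
      · show ({a0, a1, a2} : Finset V) ∈ E
        rw [← he0eq]; exact he0
      · show ({a0, a3, a4} : Finset V) ∈ E
        rw [← he2eq]; exact he2E
      · show ({a0, a5, a6} : Finset V) ∈ E
        rw [← he3eq]; exact he3E
      · show ({a1, a3, a5} : Finset V) ∈ E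
        rw [← he4eq]; exact he4E
      · show ({a1, a4, a6} : Finset V) ∈ E
        rw [← he5eq]; exact he5E
      · show ({a2, a3, a6} : Finset V) ∈ E
        rw [← he6eq]; exact he6E
      · show ({a2, a4, a5} : Finset V) ∈ E
        rw [← he7eq]; exact he7E
    · rw [Finset.card_image_of_injective _ (Finset.image_injective hainj), hm7]
      decide
  refine ⟨(Equiv.ofBijective _ hbij).symm, ?_⟩
  have hid : ∀ T : Finset (Fin 7),
      ((T.image (![a0, a1, a2, a3, a4, a5, a6] : Fin 7 → V)).image
        (⇑(Equiv.ofBijective _ hbij).symm)) = T := by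
    intro T
    rw [Finset.image_image]
    have hfun : (⇑(Equiv.ofBijective _ hbij).symm) ∘ (![a0, a1, a2, a3, a4, a5, a6] : Fin 7 → V)
        = id := by
      funext i
      exact Equiv.ofBijective_symm_apply_apply _ hbij i
    rw [hfun, Finset.image_id]
  calc E.image (fun e => e.image (⇑(Equiv.ofBijective _ hbij).symm))
      = (fanoEdges.image (Finset.image (![a0, a1, a2, a3, a4, a5, a6] : Fin 7 → V))).image
          (fun e => e.image (⇑(Equiv.ofBijective _ hbij).symm)) := by rw [hEimg]
    _ = fanoEdges.image ((fun e => e.image (⇑(Equiv.ofBijective _ hbij).symm)) ∘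
          Finset.image (![a0, a1, a2, a3, a4, a5, a6] : Fin 7 → V)) := Finset.image_image
    _ = fanoEdges.image id := Finset.image_congr (fun T _ => hid T)
    _ = fanoEdges := Finset.image_id
end

section
/- Every linear 3-uniform hypergraph G = (V, E) with at least one edge, no isolated vertices, |E| = |V|, and a system of distinct representatives satisfies |V| ≥ 7. -/
/-- Every linear 3-uniform hypergraph `G = (V, E)` (any two distinct edges intersect in
at most one vertex) with at least one edge, no isolated vertices, `|E| = |V|`, and a
system of distinct representatives satisfies `|V| ≥ 7`. -/
theorem stmt11 {V : Type*} [Fintype V] [DecidableEq V] (E : Finset (Finset V))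
    (huniform : ∀ e ∈ E, e.card = 3)
    (hlinear : ∀ e ∈ E, ∀ e' ∈ E, e ≠ e' → (e ∩ e').card ≤ 1)
    (hne : E.Nonempty)
    (hiso : ∀ v : V, ∃ e ∈ E, v ∈ e)
    (hcard : E.card = Fintype.card V)
    (hsdr : HasSDR E) :
    7 ≤ Fintype.card V := by
  classical
  have hpos : 0 < Fintype.card V := by
    rw [← hcard]; exact Finset.card_pos.mpr hne
  have hdisj : ∀ e ∈ E, ∀ e' ∈ E, e ≠ e' →
      Disjoint (e.powersetCard 2) (e'.powersetCard 2) := by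
    intro e he e' he' hnee
    rw [Finset.disjoint_left]
    intro p hp hp'
    rw [Finset.mem_powersetCard] at hp hp'
    have hsub : p ⊆ e ∩ e' := Finset.subset_inter hp.1 hp'.1
    have h1 := Finset.card_le_card hsub
    have h2 := hlinear e he e' he' hnee
    omega
  have hcardU : (E.biUnion (fun e => e.powersetCard 2)).card = 3 * E.card := by
    rw [Finset.card_biUnion hdisj]
    rw [Finset.sum_congr rfl (fun e he => by
      rw [Finset.card_powersetCard, huniform e he])]
    simp [Nat.choose, mul_comm]
  have hsub : E.biUnion (fun e => e.powersetCard 2) ⊆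
      (Finset.univ : Finset V).powersetCard 2 := by
    intro p hp
    rw [Finset.mem_biUnion] at hp
    obtain ⟨e, _, hpe⟩ := hp
    rw [Finset.mem_powersetCard] at hpe ⊢
    exact ⟨Finset.subset_univ p, hpe.2⟩
  have key : 3 * Fintype.card V ≤ (Fintype.card V).choose 2 := by
    have := Finset.card_le_card hsub
    rw [hcardU, hcard, Finset.card_powersetCard, Finset.card_univ] at this
    exact this
  by_contra hlt
  push_neg at hlt
  have h6 : Fintype.card V ≤ 6 := by omega
  clear hcard hlt
  generalize Fintype.card V = n at key hpos h6 ⊢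
  interval_cases n <;> revert key <;> decide
end

section
/- Every linear 3-uniform hypergraph G = (V, E) with |V| = |E| = 7 that has a system of distinct representatives is isomorphic to the Fano hypergraph. -/
set_option synthInstance.maxHeartbeats 1000000
set_option synthInstance.maxSize 2000
set_option maxHeartbeats 4000000

lemma third_vertex {e : Finset (Fin 7)} (hcard : e.card = 3) {x y : Fin 7}
    (hxy : x ≠ y) (hx : x ∈ e) (hy : y ∈ e) :
    ∃ z, z ∈ e ∧ z ≠ x ∧ z ≠ y ∧ ∀ w ∈ e, w = x ∨ w = y ∨ w = z := by
  obtain ⟨a, b, c, hab, hac, hbc, rfl⟩ := Finset.card_eq_three.1 hcard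
  simp only [Finset.mem_insert, Finset.mem_singleton] at hx hy
  rcases hx with rfl|rfl|rfl <;> rcases hy with rfl|rfl|rfl <;>
    first
    | exact absurd rfl hxy
    | exact ⟨c, by simp, by tauto, by tauto, by intro w hw; simp at hw; tauto⟩
    | exact ⟨b, by simp, by tauto, by tauto, by intro w hw; simp at hw; tauto⟩
    | exact ⟨a, by simp, by tauto, by tauto, by intro w hw; simp at hw; tauto⟩

lemma triple_eq {e : Finset (Fin 7)} {x y z : Fin 7} (hx : x ∈ e) (hy : y ∈ e)
    (hz : z ∈ e) (hall : ∀ w ∈ e, w = x ∨ w = y ∨ w = z) : e = {x, y, z} := by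
  apply Finset.Subset.antisymm
  · intro w hw
    simp only [Finset.mem_insert, Finset.mem_singleton]
    exact hall w hw
  · intro w hw
    simp only [Finset.mem_insert, Finset.mem_singleton] at hw
    rcases hw with rfl|rfl|rfl <;> assumption

lemma fin7_aux : ∀ (c d e f g : Fin 7),
    (c ≠ 0 ∧ c ≠ 1 ∧
    d ≠ 0 ∧ d ≠ 1 ∧ d ≠ c ∧
    e ≠ 0 ∧ e ≠ 1 ∧ e ≠ c ∧ e ≠ d ∧
    f ≠ 0 ∧ f ≠ 1 ∧ f ≠ c ∧ f ≠ d ∧ f ≠ e ∧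
    g ≠ 0 ∧ g ≠ 1 ∧ g ≠ c ∧ g ≠ d ∧ g ≠ e ∧ g ≠ f) →
    (∀ i j : Fin 7, ![0, 1, c, d, e, f, g] i = ![0, 1, c, d, e, f, g] j → i = j) ∧
      ∀ x : Fin 7, x = 0 ∨ x = 1 ∨ x = c ∨ x = d ∨ x = e ∨ x = f ∨ x = g := by
  decide

lemma key (F : Finset (Finset (Fin 7)))
    (hu : ∀ e ∈ F, e.card = 3)
    (hl : ∀ e ∈ F, ∀ e' ∈ F, e ≠ e' → (e ∩ e').card ≤ 1)
    (hc : F.card = 7) :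
    ∃ σ : Fin 7 ≃ Fin 7, F.image (fun e => e.image σ) = fanoEdges := by
  -- uniqueness of the edge through a pair
  have huniq : ∀ e ∈ F, ∀ e' ∈ F, ∀ x y : Fin 7, x ≠ y →
      x ∈ e → y ∈ e → x ∈ e' → y ∈ e' → e = e' := by
    intro e he e' he' x y hxy hxe hye hxe' hye'
    by_contra hne
    have h1 := hl e he e' he' hne
    have h2 : ({x, y} : Finset (Fin 7)) ⊆ e ∩ e' := by
      intro w hw
      simp only [Finset.mem_insert, Finset.mem_singleton] at hw
      rcases hw with rfl|rfl <;> exact Finset.mem_inter.2 ⟨by assumption, by assumption⟩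
    have h3 := Finset.card_le_card h2
    rw [Finset.card_pair hxy] at h3
    omega
  -- existence of the edge through a pair
  have hex : ∀ x y : Fin 7, x ≠ y → ∃ e ∈ F, x ∈ e ∧ y ∈ e := by
    have hdisj : ∀ e ∈ F, ∀ e' ∈ F, e ≠ e' →
        Disjoint (e.powersetCard 2) (e'.powersetCard 2) := by
      intro e he e' he' hne
      rw [Finset.disjoint_left]
      intro p hp hp'
      rw [Finset.mem_powersetCard] at hp hp'
      have hsub : p ⊆ e ∩ e' := Finset.subset_inter hp.1 hp'.1
      have := Finset.card_le_card hsub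
      have := hl e he e' he' hne
      omega
    have hT : F.biUnion (fun e => e.powersetCard 2) = Finset.univ.powersetCard 2 := by
      apply Finset.eq_of_subset_of_card_le
      · intro p hp
        rw [Finset.mem_biUnion] at hp
        obtain ⟨e, he, hpe⟩ := hp
        rw [Finset.mem_powersetCard] at hpe ⊢
        exact ⟨Finset.subset_univ p, hpe.2⟩
      · rw [Finset.card_biUnion (fun e he e' he' hne => hdisj e he e' he' hne)]
        rw [Finset.card_powersetCard]
        have : ∀ e ∈ F, (e.powersetCard 2).card = 3 := by
          intro e he
          rw [Finset.card_powersetCard, hu e he]; rfl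
        rw [Finset.sum_congr rfl this, Finset.sum_const, hc]
        simp; decide
    intro x y hxy
    have hmem : ({x, y} : Finset (Fin 7)) ∈ Finset.univ.powersetCard 2 := by
      rw [Finset.mem_powersetCard]
      exact ⟨Finset.subset_univ _, Finset.card_pair hxy⟩
    rw [← hT, Finset.mem_biUnion] at hmem
    obtain ⟨e, he, hpe⟩ := hmem
    rw [Finset.mem_powersetCard] at hpe
    exact ⟨e, he, hpe.1 (by simp), hpe.1 (by simp)⟩
  -- the construction
  have h01 : (0 : Fin 7) ≠ 1 := by decide
  obtain ⟨e1, he1, h0e1, h1e1⟩ := hex 0 1 h01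
  obtain ⟨c, hce1, hc0, hc1, he1elems⟩ := third_vertex (hu e1 he1) h01 h0e1 h1e1
  -- a vertex outside e1
  have : ∃ d, d ∉ e1 := by
    by_contra h
    push_neg at h
    have h7 : (Finset.univ : Finset (Fin 7)).card ≤ e1.card :=
      Finset.card_le_card (fun x _ => h x)
    rw [hu e1 he1] at h7
    simp at h7
  obtain ⟨d, hd⟩ := this
  have hd0 : d ≠ 0 := fun h => hd (h ▸ h0e1)
  have hd1 : d ≠ 1 := fun h => hd (h ▸ h1e1)
  have hdc : d ≠ c := fun h => hd (h ▸ hce1)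
  obtain ⟨e2, he2, h0e2, hde2⟩ := hex 0 d (Ne.symm hd0)
  obtain ⟨ev, heve2, hev0, hevd, he2elems⟩ :=
    third_vertex (hu e2 he2) (Ne.symm hd0) h0e2 hde2
  have h21 : e2 ≠ e1 := fun h => hd (h ▸ hde2)
  have hev1 : ev ≠ 1 := fun h =>
    h21 (huniq e2 he2 e1 he1 0 1 h01 h0e2 (h ▸ heve2) h0e1 h1e1)
  have hevc : ev ≠ c := fun h =>
    h21 (huniq e2 he2 e1 he1 0 c (Ne.symm hc0) h0e2 (h ▸ heve2) h0e1 hce1)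
  obtain ⟨e3, he3, h1e3, hde3⟩ := hex 1 d (Ne.symm hd1)
  obtain ⟨f, hfe3, hf1, hfd, he3elems⟩ :=
    third_vertex (hu e3 he3) (Ne.symm hd1) h1e3 hde3
  have h31 : e3 ≠ e1 := fun h => hd (h ▸ hde3)
  have h32 : e3 ≠ e2 := fun h => by
    have h1e2 : (1 : Fin 7) ∈ e2 := h ▸ h1e3
    exact h21 (huniq e2 he2 e1 he1 0 1 h01 h0e2 h1e2 h0e1 h1e1)
  have hf0 : f ≠ 0 := fun h =>
    h31 (huniq e3 he3 e1 he1 0 1 h01 (h ▸ hfe3) h1e3 h0e1 h1e1)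
  have hfc : f ≠ c := fun h =>
    h31 (huniq e3 he3 e1 he1 1 c (Ne.symm hc1) h1e3 (h ▸ hfe3) h1e1 hce1)
  have hfev : f ≠ ev := fun h =>
    h32 (huniq e3 he3 e2 he2 d ev (Ne.symm hevd) hde3 (h ▸ hfe3) hde2 heve2)
  obtain ⟨e4, he4, h0e4, hfe4⟩ := hex 0 f (Ne.symm hf0)
  obtain ⟨g, hge4, hg0, hgf, he4elems⟩ :=
    third_vertex (hu e4 he4) (Ne.symm hf0) h0e4 hfe4
  have h41 : e4 ≠ e1 := fun h => by
    rcases he1elems f (h ▸ hfe4) with h'|h'|h'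
    exacts [hf0 h', hf1 h', hfc h']
  have h42 : e4 ≠ e2 := fun h => by
    rcases he2elems f (h ▸ hfe4) with h'|h'|h'
    exacts [hf0 h', hfd h', hfev h']
  have hg1 : g ≠ 1 := fun h =>
    h41 (huniq e4 he4 e1 he1 0 1 h01 h0e4 (h ▸ hge4) h0e1 h1e1)
  have hgc : g ≠ c := fun h =>
    h41 (huniq e4 he4 e1 he1 0 c (Ne.symm hc0) h0e4 (h ▸ hge4) h0e1 hce1)
  have hgd : g ≠ d := fun h =>
    h42 (huniq e4 he4 e2 he2 0 d (Ne.symm hd0) h0e4 (h ▸ hge4) h0e2 hde2)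
  have hgev : g ≠ ev := fun h =>
    h42 (huniq e4 he4 e2 he2 0 ev (Ne.symm hev0) h0e4 (h ▸ hge4) h0e2 heve2)
  -- the cover and injectivity facts
  obtain ⟨hinj, hcover⟩ := fin7_aux c d ev f g
    ⟨hc0, hc1, hd0, hd1, hdc, hev0, hev1, hevc, hevd,
     hf0, hf1, hfc, hfd, hfev, hg0, hg1, hgc, hgd, hgev, hgf⟩
  -- edge e5 through {1, ev} has third vertex g
  obtain ⟨e5, he5, h1e5, heve5⟩ := hex 1 ev (Ne.symm hev1)
  obtain ⟨z5, hz5e5, hz51, hz5ev, he5elems⟩ :=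
    third_vertex (hu e5 he5) (Ne.symm hev1) h1e5 heve5
  have h51 : e5 ≠ e1 := fun h => by
    rcases he1elems ev (h ▸ heve5) with h'|h'|h'
    exacts [hev0 h', hev1 h', hevc h']
  have h52 : e5 ≠ e2 := fun h => by
    rcases he2elems 1 (h ▸ h1e5) with h'|h'|h'
    exacts [h01 h'.symm, hd1 h'.symm, hev1 h'.symm]
  have h53 : e5 ≠ e3 := fun h => by
    rcases he3elems ev (h ▸ heve5) with h'|h'|h'
    exacts [hev1 h', hevd h', hfev h'.symm]
  have hz50 : z5 ≠ 0 := fun h =>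
    h51 (huniq e5 he5 e1 he1 0 1 h01 (h ▸ hz5e5) h1e5 h0e1 h1e1)
  have hz5c : z5 ≠ c := fun h =>
    h51 (huniq e5 he5 e1 he1 1 c (Ne.symm hc1) h1e5 (h ▸ hz5e5) h1e1 hce1)
  have hz5d : z5 ≠ d := fun h =>
    h52 (huniq e5 he5 e2 he2 d ev (Ne.symm hevd) (h ▸ hz5e5) heve5 hde2 heve2)
  have hz5f : z5 ≠ f := fun h =>
    h53 (huniq e5 he5 e3 he3 1 f (Ne.symm hf1) h1e5 (h ▸ hz5e5) h1e3 hfe3)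
  have hz5g : z5 = g := by
    rcases hcover z5 with h|h|h|h|h|h|h
    exacts [absurd h hz50, absurd h hz51, absurd h hz5c, absurd h hz5d,
      absurd h hz5ev, absurd h hz5f, h]
  rw [hz5g] at hz5e5 he5elems
  -- edge e6 through {c, d} has third vertex g
  obtain ⟨e6, he6, hce6, hde6⟩ := hex c d (Ne.symm hdc)
  obtain ⟨z6, hz6e6, hz6c, hz6d, he6elems⟩ :=
    third_vertex (hu e6 he6) (Ne.symm hdc) hce6 hde6
  have h61 : e6 ≠ e1 := fun h => hd (h ▸ hde6)
  have h62 : e6 ≠ e2 := fun h => by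
    rcases he2elems c (h ▸ hce6) with h'|h'|h'
    exacts [hc0 h', hdc h'.symm, hevc h'.symm]
  have h63 : e6 ≠ e3 := fun h => by
    rcases he3elems c (h ▸ hce6) with h'|h'|h'
    exacts [hc1 h', hdc h'.symm, hfc h'.symm]
  have hz60 : z6 ≠ 0 := fun h =>
    h62 (huniq e6 he6 e2 he2 0 d (Ne.symm hd0) (h ▸ hz6e6) hde6 h0e2 hde2)
  have hz61 : z6 ≠ 1 := fun h =>
    h61 (huniq e6 he6 e1 he1 1 c (Ne.symm hc1) (h ▸ hz6e6) hce6 h1e1 hce1)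
  have hz6ev : z6 ≠ ev := fun h =>
    h62 (huniq e6 he6 e2 he2 d ev (Ne.symm hevd) hde6 (h ▸ hz6e6) hde2 heve2)
  have hz6f : z6 ≠ f := fun h =>
    h63 (huniq e6 he6 e3 he3 d f (Ne.symm hfd) hde6 (h ▸ hz6e6) hde3 hfe3)
  have hz6g : z6 = g := by
    rcases hcover z6 with h|h|h|h|h|h|h
    exacts [absurd h hz60, absurd h hz61, absurd h hz6c, absurd h hz6d,
      absurd h hz6ev, absurd h hz6f, h]
  rw [hz6g] at hz6e6 he6elems
  -- edge e7 through {c, ev} has third vertex f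
  obtain ⟨e7, he7, hce7, heve7⟩ := hex c ev (Ne.symm hevc)
  obtain ⟨z7, hz7e7, hz7c, hz7ev, he7elems⟩ :=
    third_vertex (hu e7 he7) (Ne.symm hevc) hce7 heve7
  have h71 : e7 ≠ e1 := fun h => by
    rcases he1elems ev (h ▸ heve7) with h'|h'|h'
    exacts [hev0 h', hev1 h', hevc h']
  have h72 : e7 ≠ e2 := fun h => by
    rcases he2elems c (h ▸ hce7) with h'|h'|h'
    exacts [hc0 h', hdc h'.symm, hevc h'.symm]
  have h76 : e7 ≠ e6 := fun h => by
    rcases he6elems ev (h ▸ heve7) with h'|h'|h'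
    exacts [hevc h', hevd h', hgev h'.symm]
  have hz70 : z7 ≠ 0 := fun h =>
    h71 (huniq e7 he7 e1 he1 0 c (Ne.symm hc0) (h ▸ hz7e7) hce7 h0e1 hce1)
  have hz71 : z7 ≠ 1 := fun h =>
    h71 (huniq e7 he7 e1 he1 1 c (Ne.symm hc1) (h ▸ hz7e7) hce7 h1e1 hce1)
  have hz7d : z7 ≠ d := fun h =>
    h72 (huniq e7 he7 e2 he2 d ev (Ne.symm hevd) (h ▸ hz7e7) heve7 hde2 heve2)
  have hz7g : z7 ≠ g := fun h =>
    h76 (huniq e7 he7 e6 he6 c g (Ne.symm hgc) hce7 (h ▸ hz7e7) hce6 hz6e6)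
  have hz7f : z7 = f := by
    rcases hcover z7 with h|h|h|h|h|h|h
    exacts [absurd h hz70, absurd h hz71, absurd h hz7c, absurd h hz7d,
      absurd h hz7ev, h, absurd h hz7g]
  rw [hz7f] at hz7e7 he7elems
  -- the edges as explicit triples
  have hE1 : e1 = {0, 1, c} := triple_eq h0e1 h1e1 hce1 he1elems
  have hE2 : e2 = {0, d, ev} := triple_eq h0e2 hde2 heve2 he2elems
  have hE3 : e3 = {1, d, f} := triple_eq h1e3 hde3 hfe3 he3elems
  have hE4 : e4 = {0, f, g} := triple_eq h0e4 hfe4 hge4 he4elems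
  have hE5 : e5 = {1, ev, g} := triple_eq h1e5 heve5 hz5e5 he5elems
  have hE6 : e6 = {c, d, g} := triple_eq hce6 hde6 hz6e6 he6elems
  have hE7 : e7 = {c, ev, f} := triple_eq hce7 heve7 hz7e7 he7elems
  -- the permutation
  set l : Fin 7 → Fin 7 := ![0, 1, c, d, ev, f, g] with hl_def
  have hlinj : Function.Injective l := fun i j h => hinj i j h
  have hlbij : Function.Bijective l :=
    (Fintype.bijective_iff_injective_and_card l).2 ⟨hlinj, rfl⟩
  set τ : Fin 7 ≃ Fin 7 := Equiv.ofBijective l hlbij with hτ_def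
  have hτ : ∀ i, τ i = l i := fun i => rfl
  have hτ0 : τ 0 = 0 := rfl
  have hτ1 : τ 1 = 1 := rfl
  have hτ2 : τ 2 = c := rfl
  have hτ3 : τ 3 = d := rfl
  have hτ4 : τ 4 = ev := rfl
  have hτ5 : τ 5 = f := rfl
  have hτ6 : τ 6 = g := rfl
  have hS : fanoEdges.image (fun e => e.image τ) = F := by
    apply Finset.eq_of_subset_of_card_le
    · intro s hs
      simp only [fanoEdges, Finset.mem_image, Finset.mem_insert,
        Finset.mem_singleton] at hs
      obtain ⟨t, ht, rfl⟩ := hs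
      rcases ht with rfl|rfl|rfl|rfl|rfl|rfl|rfl <;>
        simp only [Finset.image_insert, Finset.image_singleton,
          hτ0, hτ1, hτ2, hτ3, hτ4, hτ5, hτ6]
      · rwa [← hE1]
      · rwa [← hE2]
      · rwa [← hE4]
      · rwa [← hE3]
      · rwa [← hE5]
      · rwa [← hE6]
      · rwa [← hE7]
    · rw [hc, Finset.card_image_of_injective _ (Finset.image_injective τ.injective)]
      decide
  refine ⟨τ.symm, ?_⟩
  rw [← hS, Finset.image_image]
  have : ∀ e : Finset (Fin 7),
      ((fun e => Finset.image (⇑τ.symm) e) ∘ fun e => Finset.image (⇑τ) e) e = e := by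
    intro e
    simp [Finset.image_image]
  rw [Finset.image_congr (fun e _ => this e)]
  exact Finset.image_id

/-- Every linear 3-uniform hypergraph `G = (V, E)` (any two distinct edges intersect in
at most one vertex) with `|V| = |E| = 7` that has a system of distinct representatives
is isomorphic to the Fano hypergraph. -/
theorem stmt12 {V : Type*} [Fintype V] [DecidableEq V] (E : Finset (Finset V))
    (huniform : ∀ e ∈ E, e.card = 3)
    (hlinear : ∀ e ∈ E, ∀ e' ∈ E, e ≠ e' → (e ∩ e').card ≤ 1)
    (hV : Fintype.card V = 7)
    (hE : E.card = 7)
    (hsdr : HasSDR E) :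
    ∃ φ : V ≃ Fin 7, E.image (fun e => e.image φ) = fanoEdges := by
  have φ0 : V ≃ Fin 7 := Fintype.equivFinOfCardEq hV
  set F : Finset (Finset (Fin 7)) := E.image (fun e => e.image φ0) with hF
  have hu' : ∀ eb ∈ F, eb.card = 3 := by
    intro eb heb
    rw [hF, Finset.mem_image] at heb
    obtain ⟨e, he, rfl⟩ := heb
    rw [Finset.card_image_of_injective _ φ0.injective]
    exact huniform e he
  have hl' : ∀ eb ∈ F, ∀ eb' ∈ F, eb ≠ eb' → (eb ∩ eb').card ≤ 1 := by
    intro eb heb eb' heb' hne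
    rw [hF, Finset.mem_image] at heb heb'
    obtain ⟨e, he, rfl⟩ := heb
    obtain ⟨e', he', rfl⟩ := heb'
    have hee' : e ≠ e' := fun h => hne (by rw [h])
    rw [← Finset.image_inter _ _ φ0.injective,
      Finset.card_image_of_injective _ φ0.injective]
    exact hlinear e he e' he' hee'
  have hc' : F.card = 7 := by
    rw [hF, Finset.card_image_of_injective _ (Finset.image_injective φ0.injective), hE]
  obtain ⟨σ, hσ⟩ := key F hu' hl' hc'
  refine ⟨φ0.trans σ, ?_⟩
  rw [← hσ, hF, Finset.image_image]
  apply Finset.image_congr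
  intro e _
  simp [Finset.image_image, Function.comp]
end

section
/- There exists a linear 3-uniform hypergraph G = (V, E) with |E| = |V| = 28 which satisfies the Helly property and has a system of distinct representatives. -/
/-- The 28 edges of our linear 3-uniform Helly hypergraph on `Fin 28`. -/
def edges28 : List (Finset (Fin 28)) :=
  [{11,20,27},{9,17,24},{1,8,13},{6,9,11},{3,12,17},{4,11,22},{11,16,19},{2,14,19},
   {3,8,14},{7,20,26},{5,8,25},{0,13,19},{7,9,18},{11,23,25},{6,12,26},{21,24,25},
   {10,18,25},{7,15,21},{0,3,18},{2,10,27},{4,14,24},{13,17,23},{15,17,22},{16,24,26},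
   {1,18,22},{0,5,20},{0,6,15},{1,12,21}]

/-- Distinct representatives for the edges (in the same order). -/
def reps28 : List (Fin 28) :=
  [27,24,8,9,3,11,16,19,14,20,25,13,7,23,12,21,10,15,0,2,4,17,22,26,18,5,6,1]

def E28 : Finset (Finset (Fin 28)) := edges28.toFinset

def f28 (e : Finset (Fin 28)) : Fin 28 := reps28.getD (edges28.idxOf e) 0

lemma memE28 {e : Finset (Fin 28)} : e ∈ E28 ↔ e ∈ edges28 := List.mem_toFinset

lemma b1 : edges28.all (fun e => decide (e.card = 3)) = true := by decide +kernel

lemma b2 : edges28.all (fun e => edges28.all (fun f =>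
    decide (e ≠ f → (e ∩ f).card ≤ 1))) = true := by decide +kernel

lemma b3 : edges28.all (fun e => edges28.all (fun f => edges28.all (fun g =>
    decide ((e ∩ f).Nonempty → (e ∩ g).Nonempty → (f ∩ g).Nonempty →
      (e ∩ f ∩ g).Nonempty)))) = true := by decide +kernel

lemma b4 : edges28.all (fun e => decide (f28 e ∈ e)) = true := by decide +kernel

lemma b5 : edges28.all (fun e => edges28.all (fun f =>
    decide (f28 e = f28 f → e = f))) = true := by decide +kernel

lemma bcard : E28.card = 28 := by decide +kernel

lemma hcard : ∀ e ∈ E28, e.card = 3 := fun e he =>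
  of_decide_eq_true (List.all_eq_true.mp b1 e (memE28.mp he))

lemma hlin : ∀ e ∈ E28, ∀ e' ∈ E28, e ≠ e' → (e ∩ e').card ≤ 1 := fun e he e' he' =>
  of_decide_eq_true
    (List.all_eq_true.mp (List.all_eq_true.mp b2 e (memE28.mp he)) e' (memE28.mp he'))

lemma hkey : ∀ e ∈ E28, ∀ e' ∈ E28, ∀ f ∈ E28,
    (e ∩ e').Nonempty → (e ∩ f).Nonempty → (e' ∩ f).Nonempty →
    (e ∩ e' ∩ f).Nonempty := fun e he e' he' f hf =>
  of_decide_eq_true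
    (List.all_eq_true.mp (List.all_eq_true.mp
      (List.all_eq_true.mp b3 e (memE28.mp he)) e' (memE28.mp he')) f (memE28.mp hf))

/-- There exists a linear 3-uniform hypergraph `G = (V, E)` with `|E| = |V| = 28` (here
realized on the vertex type `Fin 28`) which satisfies the Helly property (every nonempty
family of pairwise intersecting edges has a common vertex) and has a system of distinct
representatives. -/
theorem stmt13 :
    ∃ E : Finset (Finset (Fin 28)),
      (∀ e ∈ E, e.card = 3) ∧
      (∀ e ∈ E, ∀ e' ∈ E, e ≠ e' → (e ∩ e').card ≤ 1) ∧
      E.card = 28 ∧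
      (∀ S ⊆ E, S.Nonempty → (∀ e ∈ S, ∀ e' ∈ S, (e ∩ e').Nonempty) →
        ∃ v : Fin 28, ∀ e ∈ S, v ∈ e) ∧
      HasSDR E := by
  refine ⟨E28, hcard, hlin, bcard, ?_, ?_⟩
  · intro S hS hne hpair
    obtain ⟨e₀, he₀⟩ := hne
    by_cases hall : ∀ f ∈ S, f = e₀
    · have h3 : e₀.card = 3 := hcard e₀ (hS he₀)
      obtain ⟨v, hv⟩ : e₀.Nonempty := Finset.card_pos.mp (by omega)
      exact ⟨v, fun f hf => (hall f hf) ▸ hv⟩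
    · push_neg at hall
      obtain ⟨e₁, he₁, hne01⟩ := hall
      obtain ⟨v, hv⟩ := hpair e₀ he₀ e₁ he₁
      have hsing : e₀ ∩ e₁ = {v} := by
        refine Finset.eq_singleton_iff_unique_mem.mpr ⟨hv, fun w hw => ?_⟩
        exact Finset.card_le_one.mp
          (hlin e₀ (hS he₀) e₁ (hS he₁) (fun h => hne01 h.symm)) w hw v hv
      refine ⟨v, fun f hf => ?_⟩
      obtain ⟨w, hw⟩ := hkey e₀ (hS he₀) e₁ (hS he₁) f (hS hf)
        ⟨v, hv⟩ (hpair e₀ he₀ f hf) (hpair e₁ he₁ f hf)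
      have hw01 : w ∈ e₀ ∩ e₁ := (Finset.mem_inter.mp hw).1
      have hwf : w ∈ f := (Finset.mem_inter.mp hw).2
      have hwv : w = v := by
        have := hsing ▸ hw01
        simpa using this
      exact hwv ▸ hwf
  · refine ⟨f28, ?_, ?_⟩
    · intro e he e' he' h
      exact of_decide_eq_true
        (List.all_eq_true.mp (List.all_eq_true.mp b5 e (memE28.mp he))
          e' (memE28.mp he')) h
    · intro e he
      exact of_decide_eq_true (List.all_eq_true.mp b4 e (memE28.mp he))
end

section
/- There exists a linear 3-uniform hypergraph G = (V, E) with |E| = |V| which does not have a system of distinct representatives. -/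
set_option maxRecDepth 10000

/-- The 12 lines of the affine plane AG(2,3) on points 0..8, inside `Fin 12`. -/
def myE : Finset (Finset (Fin 12)) :=
  { {0,1,2}, {3,4,5}, {6,7,8},
    {0,3,6}, {1,4,7}, {2,5,8},
    {0,4,8}, {1,5,6}, {2,3,7},
    {0,5,7}, {1,3,8}, {2,4,6} }

/-- There exists a linear 3-uniform hypergraph `G = (V, E)` with `|E| = |V|` (here
realized on a vertex type `Fin n` with `E.card = n`) which does not have a system of
distinct representatives. -/
theorem stmt14 :
    ∃ (n : ℕ) (E : Finset (Finset (Fin n))),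
      (∀ e ∈ E, e.card = 3) ∧
      (∀ e ∈ E, ∀ e' ∈ E, e ≠ e' → (e ∩ e').card ≤ 1) ∧
      E.card = n ∧
      ¬ HasSDR E := by
  refine ⟨12, myE, ?_, ?_, by decide, ?_⟩
  · intro e he; fin_cases he <;> decide
  · intro e he e' he'; fin_cases he <;> fin_cases he' <;> decide
  · rintro ⟨f, hinj, hmem⟩
    have hsubE : ∀ e ∈ myE, e ⊆ ({0,1,2,3,4,5,6,7,8} : Finset (Fin 12)) := by
      intro e he; fin_cases he <;> decide
    have hsub : myE.image f ⊆ ({0,1,2,3,4,5,6,7,8} : Finset (Fin 12)) := by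
      intro v hv
      rw [Finset.mem_image] at hv
      obtain ⟨e, he, rfl⟩ := hv
      exact hsubE e he (hmem e he)
    have hcard : (myE.image f).card = 12 := by
      rw [Finset.card_image_of_injOn hinj]; decide
    have h9 : ({0,1,2,3,4,5,6,7,8} : Finset (Fin 12)).card = 9 := by decide
    have := Finset.card_le_card hsub
    rw [hcard, h9] at this
    omega
end

section
/- Let G = (V, E) be a hypergraph with a system of distinct representatives, and let E', E'' ⊆ E be disjoint subsets of edges such that both edge-induced subhypergraphs G_{E'} and G_{E''} are blocks. Then the two blocks are vertex-disjoint: (⋃_{e ∈ E'} e) ∩ (⋃_{e ∈ E''} e) = ∅. -/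
/-- Let `G = (V, E)` be a hypergraph with a system of distinct representatives, and let
`E', E'' ⊆ E` be disjoint subsets of edges such that both edge-induced subhypergraphs
`G_{E'}` and `G_{E''}` are blocks (the number of vertices covered equals the number of
edges).  Then the two blocks are vertex-disjoint. -/
theorem stmt16 {V : Type*} [DecidableEq V] (E : Finset (Finset V))
    (hsdr : HasSDR E)
    (E' E'' : Finset (Finset V)) (hE' : E' ⊆ E) (hE'' : E'' ⊆ E)
    (hdisj : Disjoint E' E'')
    (hblock' : (E'.biUnion id).card = E'.card)
    (hblock'' : (E''.biUnion id).card = E''.card) :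
    (E'.biUnion id) ∩ (E''.biUnion id) = ∅ := by
  obtain ⟨f, hinj, hmem⟩ := hsdr
  have key : ∀ (F : Finset (Finset V)), F ⊆ E → (F.biUnion id).card = F.card →
      F.image f = F.biUnion id := by
    intro F hFE hcard
    apply Finset.eq_of_subset_of_card_le
    · intro v hv
      obtain ⟨e, he, rfl⟩ := Finset.mem_image.mp hv
      exact Finset.mem_biUnion.mpr ⟨e, he, hmem e (hFE he)⟩
    · rw [hcard, Finset.card_image_of_injOn (hinj.mono (by exact_mod_cast hFE))]
  rw [Finset.eq_empty_iff_forall_notMem]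
  intro v hv
  obtain ⟨hv1, hv2⟩ := Finset.mem_inter.mp hv
  rw [← key E' hE' hblock'] at hv1
  rw [← key E'' hE'' hblock''] at hv2
  obtain ⟨e1, he1, rfl⟩ := Finset.mem_image.mp hv1
  obtain ⟨e2, he2, heq⟩ := Finset.mem_image.mp hv2
  have : e2 = e1 := hinj (hE'' he2) (hE' he1) heq
  exact hdisj.forall_ne_finset he1 he2 this.symm
end

section
/- Let K be an algebraically closed field and W a 2-dimensional K-vector space. Let H = (H_1, …, H_m) be a collection of functions W^n → K such that each H_i is k_i-local for some k_i ≥ 2, i.e. there are a k_i-element subset E_i = {i_1, …, i_{k_i}} of {1,…,n} and a non-zero linear functional H_i^* on W^{⊗k_i} with H_i(v_1,…,v_n) = H_i^*(v_{i_1} ⊗ ⋯ ⊗ v_{i_{k_i}}) for all v_1,…,v_n ∈ W. Suppose that every index j ∈ {1,…,n} belongs to at most two of the sets E_1, …, E_m. Then there exists a tuple (v_1,…,v_n) ∈ W^n with v_j ≠ 0 for every j and H_i(v_1,…,v_n) = 0 for every i; that is, the instance has a product-state solution. -/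
open Function Finset Module Fin.CommRing
section
variable {K : Type*} [Field K] {W : Type*} [AddCommGroup W] [Module K W]

variable {K : Type*} [Field K] {W : Type*} [AddCommGroup W] [Module K W]

noncomputable def tau (b : Basis (Fin 2) K W) : W →ₗ[K] (W →ₗ[K] K) :=
  (b.coord 0).smulRight (b.coord 1) - (b.coord 1).smulRight (b.coord 0)

lemma tau_self (b : Basis (Fin 2) K W) (u : W) : tau b u u = 0 := by simp [tau, mul_comm]

noncomputable def tauInv (b : Basis (Fin 2) K W) : (W →ₗ[K] K) →ₗ[K] W :=
  ((LinearMap.applyₗ (b 1)).smulRight (b 0)) - ((LinearMap.applyₗ (b 0)).smulRight (b 1))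

lemma tau_tauInv (b : Basis (Fin 2) K W) (φ : W →ₗ[K] K) : tau b (tauInv b φ) = φ := by
  refine b.ext fun i => ?_
  fin_cases i <;> simp [tau, tauInv, Module.Basis.coord_apply]

lemma tauInv_eq_zero (b : Basis (Fin 2) K W) {φ : W →ₗ[K] K} (h : tauInv b φ = 0) : φ = 0 := by
  rw [← tau_tauInv b φ, h]; simp

lemma exists_ker (b : Basis (Fin 2) K W) (φ : W →ₗ[K] K) : ∃ w : W, w ≠ 0 ∧ φ w = 0 := by
  by_cases h : φ = 0
  · exact ⟨b 0, b.ne_zero 0, by simp [h]⟩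
  · refine ⟨tauInv b φ, fun hz => h (tauInv_eq_zero b hz), ?_⟩
    have := tau_self b (tauInv b φ)
    rwa [tau_tauInv] at this

lemma key_fwd (b : Basis (Fin 2) K W) (B : W →ₗ[K] W →ₗ[K] K) (x : W) :
    B x (tauInv b (B x)) = 0 := by
  have := tau_self b (tauInv b (B x))
  rwa [tau_tauInv] at this

/-- The cycle lemma. -/
lemma cycle_lemma [IsAlgClosed K] (b : Basis (Fin 2) K W) (t : ℕ)
    (B : Fin (t + 2) → (W →ₗ[K] W →ₗ[K] K)) :
    ∃ w : Fin (t + 2) → W, (∀ s, w s ≠ 0) ∧ ∀ s, B s (w (s - 1)) (w s) = 0 := by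
  by_cases hB : ∀ s : Fin (t + 2), ∀ x : W, B s x = 0 → x = 0
  · -- nondegenerate case: Möbius fixed point
    haveI : FiniteDimensional K W := Module.Finite.of_basis b
    haveI : Nontrivial W := nontrivial_of_ne (b 0) 0 (b.ne_zero 0)
    set A : Fin (t + 2) → Module.End K W := fun s => (tauInv b) ∘ₗ (B s) with hA
    have hAinj : ∀ s, Function.Injective (A s) := by
      intro s
      rw [injective_iff_map_eq_zero]
      intro x hx
      exact hB s x (tauInv_eq_zero b hx)
    have hAkey : ∀ s x, B s x (A s x) = 0 := fun s x => key_fwd b (B s) x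
    set C : ℕ → Module.End K W := fun r => Nat.rec 1 (fun r' Cr => A (↑(r' + 1)) ∘ₗ Cr) r
      with hC
    have hCsucc : ∀ r, C (r + 1) = A (↑(r + 1)) ∘ₗ C r := fun r => rfl
    have hCinj : ∀ r, Function.Injective (C r) := by
      intro r; induction r with
      | zero => exact fun x y h => h
      | succ r ih => exact ((hAinj _).comp ih)
    obtain ⟨μ, hμ⟩ := Module.End.exists_eigenvalue (C (t + 2))
    obtain ⟨v, hv⟩ := hμ.exists_hasEigenvector
    have hv0 : v ≠ 0 := hv.2
    have hPv : C (t + 2) v = μ • v := hv.apply_eq_smul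
    have hμ0 : μ ≠ 0 := by
      intro h
      apply hv0
      apply hCinj (t + 2)
      rw [hPv, h, zero_smul, map_zero]
    refine ⟨fun s => C s.val v, ?_, ?_⟩
    · intro s hz
      have hz' : C s.val v = 0 := hz
      exact hv0 (hCinj s.val (by rw [hz', map_zero]))
    intro s
    by_cases hs : s = 0
    · subst hs
      show B 0 (C ((0 - 1 : Fin (t + 2))).val v) (C ((0 : Fin (t+2))).val v) = 0
      have h01 : (0 - 1 : Fin (t + 2)) = -1 := by ring
      have hneg : ((-1 : Fin (t + 2))).val = t + 1 := by
        rw [Fin.coe_neg_one]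
      rw [h01, hneg]
      show B 0 (C (t + 1) v) (C 0 v) = 0
      have hx := hAkey 0 (C (t + 1) v)
      have hA0 : A 0 (C (t + 1) v) = μ • v := by
        have hstep := hCsucc (t + 1)
        have h0 : ((t + 2 : ℕ) : Fin (t + 2)) = 0 := Fin.natCast_self (t + 2)
        rw [h0] at hstep
        rw [← LinearMap.comp_apply, ← hstep, hPv]
      rw [hA0, map_smul] at hx
      have : B 0 (C (t + 1) v) v = 0 := (smul_eq_zero.mp hx).resolve_left hμ0
      exact this
    · -- s ≠ 0
      have hvne : s.val ≠ 0 := fun h => hs (Fin.ext h)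
      have hsub : (s - 1).val = s.val - 1 := by
        rw [Fin.coe_sub_one, if_neg hs]
      show B s (C ((s - 1 : Fin (t + 2))).val v) (C s.val v) = 0
      rw [hsub]
      have hrec : C s.val = A (↑(s.val)) ∘ₗ C (s.val - 1) := by
        conv_lhs => rw [show s.val = (s.val - 1) + 1 by omega]
        rw [hCsucc, show (s.val - 1) + 1 = s.val by omega]
      have hcast : ((s.val : ℕ) : Fin (t + 2)) = s := Fin.cast_val_eq_self s
      have := hAkey s (C (s.val - 1) v)
      rw [hrec]
      simpa [hcast] using this
  · -- degenerate case
    push_neg at hB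
    obtain ⟨s₀, x₀, hBx₀, hx₀⟩ := hB
    have bk : ∀ (s : Fin (t + 2)) (x : W), ∃ y : W, y ≠ 0 ∧ B s y x = 0 := by
      intro s x
      exact exists_ker b ((B s).flip x)
    choose bkf bkne bkeq using bk
    set u : ℕ → W := fun r =>
      Nat.rec x₀ (fun r' ur => bkf (s₀ - 1 - (r' : Fin (t + 2))) ur) r with hu
    have husucc : ∀ r, u (r + 1) = bkf (s₀ - 1 - (r : Fin (t + 2))) (u r) := fun r => rfl
    have hune : ∀ r, u r ≠ 0 := by
      intro r; induction r with
      | zero => exact hx₀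
      | succ r ih => rw [husucc]; exact bkne _ _
    refine ⟨fun s => u ((s₀ - 1 - s).val), fun s => hune _, ?_⟩
    intro s
    show B s (u ((s₀ - 1 - (s - 1)).val)) (u ((s₀ - 1 - s).val)) = 0
    by_cases hs : s = s₀
    · have h1 : s₀ - 1 - (s - 1) = 0 := by rw [hs]; ring
      rw [h1]
      show B s (u 0) _ = 0
      show B s x₀ _ = 0
      rw [hs, hBx₀]
      simp
    · set r := (s₀ - 1 - s).val with hr
      have hcast : ((r : ℕ) : Fin (t + 2)) = s₀ - 1 - s := Fin.cast_val_eq_self _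
      have hBidx : s₀ - 1 - ((r : ℕ) : Fin (t + 2)) = s := by rw [hcast]; ring
      have hr1 : (s₀ - 1 - (s - 1)).val = r + 1 := by
        have he : s₀ - 1 - (s - 1) = (s₀ - 1 - s) + 1 := by ring
        rw [he]
        have hne : s₀ - 1 - s ≠ Fin.last (t + 1) := by
          intro h
          apply hs
          have hm1 : s₀ - 1 - s = -1 := by
            rw [h]; ext; rw [Fin.coe_neg_one, Fin.val_last]
          linear_combination -hm1
        have hlt : (s₀ - 1 - s) < Fin.last (t + 1) := lt_of_le_of_ne (Fin.le_last _) hne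
        exact Fin.val_add_one_of_lt hlt
      rw [hr1, husucc, hBidx]
      exact bkeq s (u r)

/-- bilinear map obtained by putting two free slots in a multilinear functional -/
noncomputable def slot2 {c : ℕ} (T : PiTensorProduct K (fun _ : Fin c => W) →ₗ[K] K)
    (base : Fin c → W) {l₁ l₂ : Fin c} (h : l₁ ≠ l₂) : W →ₗ[K] W →ₗ[K] K :=
  LinearMap.mk₂ K
    (fun x y => T (PiTensorProduct.tprod K (update (update base l₁ x) l₂ y)))
    (fun x x' y => by
      simp only [update_comm h, MultilinearMap.map_update_add, map_add])
    (fun a x y => by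
      simp only [update_comm h, MultilinearMap.map_update_smul, map_smul])
    (fun x y y' => by
      simp only [MultilinearMap.map_update_add, map_add])
    (fun a x y => by
      simp only [MultilinearMap.map_update_smul, map_smul])

lemma slot2_apply {c : ℕ} (T : PiTensorProduct K (fun _ : Fin c => W) →ₗ[K] K)
    (base : Fin c → W) {l₁ l₂ : Fin c} (h : l₁ ≠ l₂) (x y : W) :
    slot2 T base h x y = T (PiTensorProduct.tprod K (update (update base l₁ x) l₂ y)) := rfl

lemma aux_main [IsAlgClosed K] (b : Basis (Fin 2) K W)
    (n m : ℕ) (k : Fin m → ℕ) (hk : ∀ i, 2 ≤ k i)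
    (σ : (i : Fin m) → Fin (k i) → Fin n)
    (hσ : ∀ i, Function.Injective (σ i))
    (T : (i : Fin m) → (PiTensorProduct K (fun _ : Fin (k i) => W) →ₗ[K] K))
    (hocc : ∀ j : Fin n,
      (Finset.univ.filter (fun i : Fin m => j ∈ Finset.univ.image (σ i))).card ≤ 2)
    (N : ℕ) :
    ∀ I : Finset (Fin m), I.card ≤ N → ∃ v : Fin n → W, (∀ j, v j ≠ 0) ∧
      ∀ i ∈ I, T i (PiTensorProduct.tprod K (fun l => v (σ i l))) = 0 := by
  induction N with
  | zero =>
    intro I hI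
    rw [Nat.le_zero, card_eq_zero] at hI
    subst hI
    exact ⟨fun _ => b 0, fun _ => b.ne_zero 0, by simp⟩
  | succ N ih =>
    intro I hI
    rcases I.eq_empty_or_nonempty with rfl | ⟨i₀, hi₀⟩
    · exact ⟨fun _ => b 0, fun _ => b.ne_zero 0, by simp⟩
    by_cases hcase : ∀ i ∈ I, ∀ l : Fin (k i), ∃ i' ∈ I, i' ≠ i ∧ σ i l ∈ univ.image (σ i')
    · -- Case 2 : every qubit of every clause of I is shared; find a cycle
      have hcase' : ∀ i ∈ I, ∀ q ∈ univ.image (σ i),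
          ∃ i', i' ∈ I ∧ i' ≠ i ∧ q ∈ univ.image (σ i') := by
        intro i hi q hq
        obtain ⟨l, -, rfl⟩ := mem_image.mp hq
        obtain ⟨i', hi'I, hne, hmem⟩ := hcase i hi l
        exact ⟨i', hi'I, hne, hmem⟩
      have hstep : ∀ p : Fin m × Fin n, ∃ p' : Fin m × Fin n,
          (p.1 ∈ I ∧ p.2 ∈ univ.image (σ p.1)) →
          (p'.1 ∈ I ∧ p'.1 ≠ p.1 ∧ p.2 ∈ univ.image (σ p'.1) ∧
            p'.2 ∈ univ.image (σ p'.1) ∧ p'.2 ≠ p.2) := by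
        intro p
        by_cases h : p.1 ∈ I ∧ p.2 ∈ univ.image (σ p.1)
        · obtain ⟨i', hi'I, hne, hmem⟩ := hcase' p.1 h.1 p.2 h.2
          have h0 : (0 : ℕ) < k i' := by have := hk i'; omega
          have h1 : (1 : ℕ) < k i' := by have := hk i'; omega
          by_cases hsp : σ i' ⟨0, h0⟩ = p.2
          · refine ⟨(i', σ i' ⟨1, h1⟩), fun _ => ⟨hi'I, hne, hmem,
              mem_image_of_mem _ (mem_univ _), fun hcontra => ?_⟩⟩
            rw [← hsp] at hcontra
            have := hσ i' hcontra
            simp [Fin.ext_iff] at this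
          · exact ⟨(i', σ i' ⟨0, h0⟩), fun _ => ⟨hi'I, hne, hmem,
              mem_image_of_mem _ (mem_univ _), hsp⟩⟩
        · exact ⟨p, fun hc => absurd hc h⟩
      choose stepf hstepf using hstep
      have h0k : (0 : ℕ) < k i₀ := by have := hk i₀; omega
      set sq : ℕ → Fin m × Fin n :=
        fun r => Nat.rec (i₀, σ i₀ ⟨0, h0k⟩) (fun _ p => stepf p) r with hsq
      have hsqsucc : ∀ r, sq (r + 1) = stepf (sq r) := fun r => rfl
      have inv : ∀ r, (sq r).1 ∈ I ∧ (sq r).2 ∈ univ.image (σ (sq r).1) := by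
        intro r; induction r with
        | zero => exact ⟨hi₀, mem_image_of_mem _ (mem_univ _)⟩
        | succ r ihr =>
          have := hstepf (sq r) ihr
          rw [hsqsucc]
          exact ⟨this.1, this.2.2.2.1⟩
      have rel : ∀ r, (sq (r + 1)).1 ≠ (sq r).1 ∧ (sq r).2 ∈ univ.image (σ (sq (r + 1)).1)
          ∧ (sq (r + 1)).2 ≠ (sq r).2 := by
        intro r
        have := hstepf (sq r) (inv r)
        rw [hsqsucc]
        exact ⟨this.2.1, this.2.2.1, this.2.2.2.2⟩
      set c : ℕ → Fin m := fun r => (sq r).1 with hcdef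
      have hQex : ∃ bb, ∃ aa, aa < bb ∧ c aa = c bb := by
        obtain ⟨x, y, hxy, he⟩ := Fintype.exists_ne_map_eq_of_card_lt
          (fun r : Fin (m + 1) => c r.val) (by simp)
        rcases hxy.lt_or_gt with h | h
        · exact ⟨y.val, x.val, h, he⟩
        · exact ⟨x.val, y.val, h, he.symm⟩
      set b₀ := Nat.find hQex with hb₀
      obtain ⟨a, hab, hcab⟩ : ∃ aa, aa < b₀ ∧ c aa = c b₀ := Nat.find_spec hQex
      have cinj : ∀ x y, x < y → y < b₀ → c x ≠ c y := by
        intro x y hxy hy hne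
        exact Nat.find_min hQex hy ⟨x, hxy, hne⟩
      have hb2 : a + 2 ≤ b₀ := by
        rcases Nat.lt_or_ge (a + 1) b₀ with h | h
        · omega
        · exfalso
          have hb1 : b₀ = a + 1 := by omega
          rw [hb1] at hcab
          exact (rel a).1 hcab.symm
      obtain ⟨t, hbt⟩ : ∃ t, b₀ = a + (t + 2) := ⟨b₀ - a - 2, by omega⟩
      set C : Fin (t + 2) → Fin m := fun s => c (a + s.val) with hC
      set Qb : Fin (t + 2) → Fin n := fun s => (sq (a + s.val)).2 with hQb
      have hCinjF : Function.Injective C := by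
        have key : ∀ x y : Fin (t + 2), x < y → C x ≠ C y := by
          intro x y hxy
          have hxy' := Fin.lt_def.mp hxy
          have hylt := y.isLt
          exact cinj (a + x.val) (a + y.val) (by omega) (by omega)
        intro s s' h
        by_contra hne
        rcases Ne.lt_or_gt hne with hlt | hlt
        · exact key _ _ hlt h
        · exact key _ _ hlt h.symm
      have hone : (1 : Fin (t + 2)) ≠ 0 := by
        simp [Fin.ext_iff]
      have hQbC : ∀ s : Fin (t + 2), Qb s ∈ univ.image (σ (C s)) := fun s => (inv (a + s.val)).2
      have hCadd : ∀ s : Fin (t + 2), C (s + 1) = c (a + s.val + 1) := by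
        intro s
        rcases Nat.lt_or_ge (s.val + 1) (t + 2) with hlt | hge
        · have h1 : (s + 1).val = s.val + 1 :=
            Fin.val_add_one_of_lt (by rw [Fin.lt_def, Fin.val_last]; omega)
          show c (a + (s + 1).val) = c (a + s.val + 1)
          rw [h1, ← Nat.add_assoc]
        · have hsv : s.val = t + 1 := by have := s.isLt; omega
          have hlast : s = Fin.last (t + 1) := Fin.ext (by rw [hsv, Fin.val_last])
          have h1 : s + 1 = 0 := by rw [hlast, Fin.last_add_one]
          show c (a + (s + 1).val) = c (a + s.val + 1)
          rw [h1]
          have hb : a + s.val + 1 = b₀ := by omega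
          rw [hb]
          show c (a + 0) = c b₀
          rw [Nat.add_zero]
          exact hcab
      have hQbC1 : ∀ s : Fin (t + 2), Qb s ∈ univ.image (σ (C (s + 1))) := by
        intro s
        rw [hCadd s]
        exact (rel (a + s.val)).2.1
      have hCne : ∀ s : Fin (t + 2), C s ≠ C (s + 1) := by
        intro s h
        have := hCinjF h
        apply hone
        linear_combination -this
      have hfilter : ∀ s : Fin (t + 2),
          ({C s, C (s + 1)} : Finset (Fin m))
            = univ.filter (fun i => Qb s ∈ univ.image (σ i)) := by
        intro s
        apply eq_of_subset_of_card_le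
        · intro i hi
          rw [mem_insert, mem_singleton] at hi
          rcases hi with rfl | rfl
          · exact mem_filter.mpr ⟨mem_univ _, hQbC s⟩
          · exact mem_filter.mpr ⟨mem_univ _, hQbC1 s⟩
        · calc (univ.filter (fun i => Qb s ∈ univ.image (σ i))).card ≤ 2 := hocc (Qb s)
            _ = ({C s, C (s + 1)} : Finset (Fin m)).card := (card_pair (hCne s)).symm
      have hclause : ∀ (s : Fin (t + 2)) (i : Fin m), Qb s ∈ univ.image (σ i) →
          i = C s ∨ i = C (s + 1) := by
        intro s i hmem
        have : i ∈ ({C s, C (s + 1)} : Finset (Fin m)) := by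
          rw [hfilter s]
          exact mem_filter.mpr ⟨mem_univ _, hmem⟩
        rw [mem_insert, mem_singleton] at this
        exact this
      have hQbnowrap : ∀ s : Fin (t + 2), s.val + 1 < t + 2 → Qb (s + 1) ≠ Qb s := by
        intro s hlt
        have h1 : (s + 1).val = s.val + 1 :=
          Fin.val_add_one_of_lt (by rw [Fin.lt_def, Fin.val_last]; omega)
        show (sq (a + (s + 1).val)).2 ≠ (sq (a + s.val)).2
        rw [h1, ← Nat.add_assoc]
        exact (rel (a + s.val)).2.2
      have hQbinj : ∀ s s' : Fin (t + 2), Qb s = Qb s' → s = s' := by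
        intro s s' he
        by_contra hne
        have hc1 : C s' = C s ∨ C s' = C (s + 1) := by
          have hm : Qb s ∈ univ.image (σ (C s')) := by rw [he]; exact hQbC s'
          exact hclause s (C s') hm
        rcases hc1 with hcc | hcc
        · exact hne (hCinjF hcc).symm
        have hs' : s' = s + 1 := hCinjF hcc
        have hc2 : C (s' + 1) = C s ∨ C (s' + 1) = C (s + 1) := by
          have hm : Qb s ∈ univ.image (σ (C (s' + 1))) := by rw [he]; exact hQbC1 s'
          exact hclause s (C (s' + 1)) hm
        rcases hc2 with hcc2 | hcc2
        · -- s' + 1 = s together with s' = s + 1 forces t = 0 (cycle of length 2)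
          have hss : s' + 1 = s := hCinjF hcc2
          have h2 : (2 : Fin (t + 2)) = 0 := by
            have : s + 1 + 1 = s := by rw [← hs']; exact hss
            linear_combination this
          have ht0 : t = 0 := by
            rcases t with _ | t''
            · rfl
            · exfalso
              have hval : ((2 : ℕ) : Fin (t'' + 3)).val = 2 := Fin.val_cast_of_lt (by omega)
              have h2' : ((2 : ℕ) : Fin (t'' + 1 + 2)) = 0 := by
                push_cast
                exact h2
              rw [Fin.ext_iff] at h2'
              simp only [Fin.val_zero] at h2'
              omega
          subst ht0
          -- now Fin 2 : s ≠ s', s' = s + 1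
          have hs2 := s.isLt
          have hs'2 := s'.isLt
          have hs01 : s.val = 0 ∨ s.val = 1 := by omega
          rcases hs01 with hv0 | hv1
          · have : s.val + 1 < 2 := by omega
            exact hQbnowrap s this (by rw [← hs', ← he])
          · have hsv' : s'.val = 0 := by
              rw [Fin.ext_iff] at hne
              omega
            have : s'.val + 1 < 2 := by omega
            exact hQbnowrap s' this (by rw [hss]; exact he)
        · have h11 : s' + 1 = s + 1 := hCinjF hcc2
          have hss : s' = s := by linear_combination h11
          exact hne hss.symm
      -- remove cycle clauses and use induction hypothesis
      have hCsubI : ∀ s, C s ∈ I := fun s => (inv (a + s.val)).1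
      have hsubset : image C univ ⊆ I := by
        intro i hi
        obtain ⟨s, -, rfl⟩ := mem_image.mp hi
        exact hCsubI s
      have hI'card : (I \ image C univ).card ≤ N := by
        have hss : I \ image C univ ⊂ I :=
          sdiff_ssubset hsubset ⟨C 0, mem_image_of_mem _ (mem_univ _)⟩
        have := card_lt_card hss
        omega
      obtain ⟨v', hv'ne, hv'sat⟩ := ih (I \ image C univ) hI'card
      have hsub_ne : ∀ s : Fin (t + 2), s - 1 ≠ s := by
        intro s h
        apply hone
        linear_combination -h
      have hsm1 : ∀ s : Fin (t + 2), Qb (s - 1) ∈ univ.image (σ (C s)) := by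
        intro s
        have := hQbC1 (s - 1)
        have hsa : s - 1 + 1 = s := by ring
        rwa [hsa] at this
      have hslots : ∀ s : Fin (t + 2), ∃ p : Fin (k (C s)) × Fin (k (C s)),
          σ (C s) p.1 = Qb (s - 1) ∧ σ (C s) p.2 = Qb s ∧ p.1 ≠ p.2 := by
        intro s
        obtain ⟨l₁, -, h1⟩ := mem_image.mp (hsm1 s)
        obtain ⟨l₂, -, h2⟩ := mem_image.mp (hQbC s)
        refine ⟨(l₁, l₂), h1, h2, fun h => ?_⟩
        have h' : l₁ = l₂ := h
        rw [h', h2] at h1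
        exact hsub_ne s (hQbinj _ _ h1.symm)
      choose lp hl₁ hl₂ hlne using hslots
      set Bf : Fin (t + 2) → (W →ₗ[K] W →ₗ[K] K) :=
        fun s => slot2 (T (C s)) (fun l => v' (σ (C s) l)) (hlne s) with hBf
      obtain ⟨w, hwne, hwsat⟩ := cycle_lemma b t Bf
      set v : Fin n → W := fun j => if h : ∃ s, Qb s = j then w h.choose else v' j with hv
      have hvQb : ∀ s, v (Qb s) = w s := by
        intro s
        show (if h : ∃ s', Qb s' = Qb s then w h.choose else v' (Qb s)) = w s
        rw [dif_pos ⟨s, rfl⟩]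
        congr 1
        exact hQbinj _ _ (Exists.choose_spec (⟨s, rfl⟩ : ∃ s', Qb s' = Qb s))
      have hvother : ∀ j, (∀ s, Qb s ≠ j) → v j = v' j := by
        intro j hj
        show (if h : ∃ s, Qb s = j then w h.choose else v' j) = v' j
        rw [dif_neg (fun hc => hj hc.choose hc.choose_spec)]
      refine ⟨v, ?_, ?_⟩
      · intro j
        show (if h : ∃ s, Qb s = j then w h.choose else v' j) ≠ 0
        split
        · exact hwne _
        · exact hv'ne j
      · intro i hiI
        by_cases hicyc : i ∈ image C univ
        · obtain ⟨s, -, rfl⟩ := mem_image.mp hicyc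
          have hfam : (fun l => v (σ (C s) l)) =
              update (update (fun l => v' (σ (C s) l)) (lp s).1 (w (s - 1))) (lp s).2 (w s) := by
            funext l
            rcases eq_or_ne l (lp s).2 with rfl | h2
            · rw [update_self, hl₂ s]
              exact hvQb s
            · rw [update_of_ne h2]
              rcases eq_or_ne l (lp s).1 with rfl | h1
              · rw [update_self, hl₁ s]
                exact hvQb (s - 1)
              · rw [update_of_ne h1]
                apply hvother
                intro s' hs'
                have hm : Qb s' ∈ univ.image (σ (C s)) := by
                  rw [hs']
                  exact mem_image_of_mem _ (mem_univ l)
                rcases hclause s' (C s) hm with hcc | hcc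
                · have hse : s = s' := hCinjF hcc
                  apply h2
                  apply hσ (C s)
                  rw [hl₂ s, ← hs', hse]
                · have hse : s = s' + 1 := hCinjF hcc
                  have hse' : s' = s - 1 := by linear_combination -hse
                  apply h1
                  apply hσ (C s)
                  rw [hl₁ s, ← hs', hse']
          rw [hfam]
          exact hwsat s
        · have hfam : (fun l => v (σ i l)) = fun l => v' (σ i l) := by
            funext l
            apply hvother
            intro s hs
            have hm : Qb s ∈ univ.image (σ i) := by
              rw [hs]
              exact mem_image_of_mem _ (mem_univ l)
            rcases hclause s i hm with rfl | rfl <;>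
              exact hicyc (mem_image_of_mem _ (mem_univ _))
          rw [hfam]
          exact hv'sat i (mem_sdiff.mpr ⟨hiI, hicyc⟩)

    · -- Case 1 : some clause has a private qubit
      push_neg at hcase
      obtain ⟨i, hiI, l, hpriv⟩ := hcase
      obtain ⟨v', hvne, hvsat⟩ := ih (I.erase i)
        (by have := card_erase_of_mem hiI; omega)
      set q := σ i l with hq
      set φ : W →ₗ[K] K :=
        (T i) ∘ₗ ((PiTensorProduct.tprod K).toLinearMap (fun l' => v' (σ i l')) l) with hφ
      obtain ⟨w, hw0, hwker⟩ := exists_ker b φ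
      refine ⟨Function.update v' q w, ?_, ?_⟩
      · intro j
        rcases eq_or_ne j q with rfl | hj
        · rwa [update_self]
        · rw [update_of_ne hj]; exact hvne j
      · intro i'' hi''
        rcases eq_or_ne i'' i with rfl | hne
        · have hfam : (fun l' => Function.update v' q w (σ i'' l'))
              = update (fun l' => v' (σ i'' l')) l w := by
            funext l'
            rcases eq_or_ne l' l with rfl | hl'
            · rw [update_self, update_self]
            · rw [update_of_ne hl', update_of_ne (fun h => hl' (hσ i'' h))]
          rw [hfam]
          exact hwker
        · have hnotin : σ i l ∉ univ.image (σ i'') :=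
            hpriv i'' (mem_of_mem_erase (mem_erase.mpr ⟨hne, hi''⟩)) hne
          have hfam : (fun l' => Function.update v' q w (σ i'' l'))
              = fun l' => v' (σ i'' l') := by
            funext l'
            refine update_of_ne (fun h => hnotin ?_) _ _
            rw [← hq, ← h]
            exact mem_image_of_mem _ (mem_univ l')
          rw [hfam]
          exact hvsat i'' (mem_erase.mpr ⟨hne, hi''⟩)

end

/-- Let `K` be an algebraically closed field and `W` a 2-dimensional `K`-vector space.
Let `H = (H_1, …, H_m)` be a collection of functions `W^n → K` such that each `H_i` is
`k_i`-local for some `k_i ≥ 2`: the `i`-th constraint acts on the `k_i`-element subset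
of `{1,…,n} ≅ Fin n` enumerated by the injection `σ i : Fin (k i) → Fin n`, via a
non-zero linear functional `T i` on `W^{⊗ k_i}`, so that
`H_i v = T i (v_{σ i 0} ⊗ ⋯ ⊗ v_{σ i (k_i − 1)})`.  Suppose every index `j : Fin n`
belongs to at most two of the sets `E_i = Finset.univ.image (σ i)`.  Then there is a
tuple `v` with all components non-zero annihilating all the constraints, i.e. the
instance has a product-state solution. -/
theorem stmt18 (K : Type*) [Field K] [IsAlgClosed K]
    (W : Type*) [AddCommGroup W] [Module K W]
    (hW : Module.finrank K W = 2)
    (n m : ℕ) (k : Fin m → ℕ) (hk : ∀ i, 2 ≤ k i)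
    (σ : (i : Fin m) → Fin (k i) → Fin n)
    (hσ : ∀ i, Function.Injective (σ i))
    (T : (i : Fin m) → (PiTensorProduct K (fun _ : Fin (k i) => W) →ₗ[K] K))
    (hT : ∀ i, T i ≠ 0)
    (hocc : ∀ j : Fin n,
      (Finset.univ.filter (fun i : Fin m => j ∈ Finset.univ.image (σ i))).card ≤ 2) :
    ∃ v : Fin n → W, (∀ j, v j ≠ 0) ∧
      ∀ i, T i (PiTensorProduct.tprod K (fun l => v (σ i l))) = 0 := by
  have hfin : Module.Finite K W := Module.finite_of_finrank_pos (by rw [hW]; omega)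
  let b : Basis (Fin 2) K W := Module.finBasisOfFinrankEq K W hW
  obtain ⟨v, h1, h2⟩ := aux_main b n m k hk σ hσ T hocc (Finset.univ.card)
    Finset.univ le_rfl
  exact ⟨v, h1, fun i => h2 i (Finset.mem_univ i)⟩
end
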